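/- arXiv:math/0701569 — 6 statements merged into one kernel-verified Lean document; each statement's English description precedes it below -/
import Mathlib

section
/- Let A be a real d×d matrix with A v = λ v for a unit vector v and λ > 0; let L be an A-invariant subspace with ℝ^d = span{v} ⊕ L such that there are constants C₂ > 0 and Δ > 0 with ‖e^{tA} u‖ ≤ C₂ e^{(λ−Δ)t} ‖u‖ for all u ∈ L and t ≥ 0; let Π_v and Π_L be the projections onto span{v} and L along each other. Let A(·) : [0,∞) → ℝ^{d×d} be continuous with ‖A(s) − A‖ ≤ C₃ e^{−μs} for some C₃ ≥ 0 and μ > 0, let Y : [0,∞) → ℝ^d be continuous with ‖Y(s)‖ ≤ K e^{(λ+α)s} for some K ≥ 0 and some α with 0 < α < μ, and define D(t) = ∫_0^t e^{A(t−s)} (A(s) − A) Y(s) ds. Then the integral I = ∫_0^∞ e^{−λs} Π_v (A(s) − A) Y(s) ds converges absolutely, and there exist ρ > 0 and a constant C' such that ‖e^{−λt} D(t) − I‖ ≤ C' e^{−ρt} for all t ≥ 0. -/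
/-!
Split the forcing `w s = (A' s - A) (Y s)` along `span {v} ⊕ L`. On `span {v}` the semigroup acts
by `e^{λτ}`, so the `v`-part of `e^{-λt} D t` is exactly `∫₀ᵗ e^{-λs} Π_v (w s)`, whose integrand
decays like `e^{-(μ-α)s}`; its distance to `I` is the tail `∫ₜ^∞`, of order `e^{-(μ-α)t}`. On `L`
the semigroup grows at most like `e^{(λ-Δ)τ}`, so the `L`-part of `e^{-λt} D t` is
`O(t e^{-min Δ (μ-α) t})`, and any `ρ < min Δ (μ-α)` works.
-/

open Filter Set MeasureTheory intervalIntegral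
open scoped Interval

theorem mul_exp_neg_mul_le {m : ℝ} (hm : 0 < m) (t : ℝ) :
    t * Real.exp (-m * t) ≤ 2 / m * Real.exp (-(m / 2) * t) := by
  have ht : t ≤ 2 / m * Real.exp (m / 2 * t) := by
    have := Real.add_one_le_exp (m / 2 * t)
    rw [div_mul_eq_mul_div, le_div_iff₀ hm]
    nlinarith
  calc t * Real.exp (-m * t) ≤ 2 / m * Real.exp (m / 2 * t) * Real.exp (-m * t) := by gcongr
    _ = 2 / m * Real.exp (-(m / 2) * t) := by
        rw [mul_assoc, ← Real.exp_add]; ring_nf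

section

variable {E : Type*} [NormedAddCommGroup E]

theorem integrableOn_Ioi_of_norm_le_mul_exp {f : ℝ → E} {a M γ : ℝ} (hγ : 0 < γ)
    (hf : ContinuousOn f (Ici a)) (hfb : ∀ s ≥ a, ‖f s‖ ≤ M * Real.exp (-γ * s)) :
    IntegrableOn f (Ioi a) :=
  ((exp_neg_integrableOn_Ioi a hγ).const_mul M).mono'
    ((hf.mono Ioi_subset_Ici_self).aestronglyMeasurable measurableSet_Ioi)
    ((ae_restrict_mem measurableSet_Ioi).mono fun s hs => hfb s (le_of_lt hs))

variable [NormedSpace ℝ E]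

theorem norm_setIntegral_Ioi_le_of_norm_le_mul_exp {f : ℝ → E} {a M γ : ℝ} (hγ : 0 < γ)
    (hfb : ∀ s ≥ a, ‖f s‖ ≤ M * Real.exp (-γ * s)) :
    ‖∫ s in Ioi a, f s‖ ≤ M / γ * Real.exp (-γ * a) :=
  calc ‖∫ s in Ioi a, f s‖ ≤ ∫ s in Ioi a, M * Real.exp (-γ * s) :=
        norm_integral_le_of_norm_le ((exp_neg_integrableOn_Ioi a hγ).const_mul M)
          ((ae_restrict_mem measurableSet_Ioi).mono fun s hs => hfb s (le_of_lt hs))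
    _ = M / γ * Real.exp (-γ * a) := by
        rw [MeasureTheory.integral_const_mul, integral_exp_mul_Ioi (neg_neg_of_pos hγ)]
        field_simp

theorem norm_exp_neg_mul_smul_integral_exp_smul_apply_le {A : E →L[ℝ] E} {L : Submodule ℝ E}
    {lam Δ C₂ γ C t : ℝ} (hC₂ : 0 ≤ C₂)
    (hLdecay : ∀ u ∈ L, ∀ τ ≥ (0:ℝ),
      ‖NormedSpace.exp (τ • A) u‖ ≤ C₂ * Real.exp ((lam - Δ) * τ) * ‖u‖)
    {u : ℝ → E} (huL : ∀ s, u s ∈ L) (hub : ∀ s ≥ (0:ℝ), ‖u s‖ ≤ C * Real.exp ((lam - γ) * s))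
    (ht : 0 ≤ t) :
    ‖Real.exp (-lam * t) • ∫ s in (0:ℝ)..t, NormedSpace.exp ((t - s) • A) (u s)‖ ≤
      C₂ * C * (t * Real.exp (-min Δ γ * t)) := by
  have hC : 0 ≤ C := by simpa using (norm_nonneg _).trans (hub 0 le_rfl)
  set m := min Δ γ
  have hpt : ∀ s ∈ Ι 0 t,
      ‖NormedSpace.exp ((t - s) • A) (u s)‖ ≤ C₂ * C * Real.exp ((lam - m) * t) := by
    rintro s ⟨hs0, hst⟩
    rw [min_eq_left ht] at hs0
    rw [max_eq_right ht] at hst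
    calc ‖NormedSpace.exp ((t - s) • A) (u s)‖
        ≤ C₂ * Real.exp ((lam - Δ) * (t - s)) * ‖u s‖ := hLdecay _ (huL s) _ (sub_nonneg.2 hst)
      _ ≤ C₂ * Real.exp ((lam - Δ) * (t - s)) * (C * Real.exp ((lam - γ) * s)) := by
          gcongr; exact hub s hs0.le
      _ = C₂ * C * Real.exp ((lam - Δ) * (t - s) + (lam - γ) * s) := by
          rw [Real.exp_add]; ring
      _ ≤ C₂ * C * Real.exp ((lam - m) * t) := by
          gcongr
          nlinarith [mul_le_mul_of_nonneg_right (min_le_left Δ γ) (sub_nonneg.2 hst),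
            mul_le_mul_of_nonneg_right (min_le_right Δ γ) hs0.le]
  calc ‖Real.exp (-lam * t) • ∫ s in (0:ℝ)..t, NormedSpace.exp ((t - s) • A) (u s)‖
      ≤ Real.exp (-lam * t) * (C₂ * C * Real.exp ((lam - m) * t) * |t - 0|) := by
        rw [norm_smul, Real.norm_of_nonneg (Real.exp_pos _).le]
        gcongr
        exact intervalIntegral.norm_integral_le_of_norm_le_const hpt
    _ = C₂ * C * (t * Real.exp (-m * t)) := by
        rw [sub_zero, abs_of_nonneg ht, show -m * t = -lam * t + (lam - m) * t by ring,
          Real.exp_add]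
        ring

variable [CompleteSpace E]

theorem exp_smul_apply_of_apply_eq_smul {A : E →L[ℝ] E} {v : E} {lam : ℝ}
    (hAv : A v = lam • v) (τ : ℝ) :
    NormedSpace.exp (τ • A) v = Real.exp (τ * lam) • v := by
  have hpow : ∀ n : ℕ, ((τ • A) ^ n) v = (τ * lam) ^ n • v := by
    intro n
    induction n with
    | zero => simp
    | succ n ih =>
      rw [pow_succ', mul_apply_eq_comp, ih, map_smul, smul_apply,
        hAv, smul_smul, smul_smul, pow_succ']
      ring_nf
  have hexp := (NormedSpace.exp_series_hasSum_exp' (𝕂 := ℝ) (τ • A)).mapL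
    (ContinuousLinearMap.apply ℝ E v)
  have hreal := (NormedSpace.exp_series_hasSum_exp' (𝕂 := ℝ) (τ * lam)).smul_const v
  rw [← Real.exp_eq_exp_ℝ] at hreal
  refine hexp.unique ?_
  simpa [hpow, smul_smul] using hreal

theorem exp_neg_mul_smul_integral_exp_smul_apply {A Pv PL : E →L[ℝ] E} {lam : ℝ}
    (hAPv : ∀ z, A (Pv z) = lam • Pv z) (hsum : ∀ z, Pv z + PL z = z)
    {w : ℝ → E} {t : ℝ} (hw : ContinuousOn w (uIcc 0 t)) :
    Real.exp (-lam * t) • ∫ s in (0:ℝ)..t, NormedSpace.exp ((t - s) • A) (w s) =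
      (∫ s in (0:ℝ)..t, Real.exp (-lam * s) • Pv (w s)) +
        Real.exp (-lam * t) • ∫ s in (0:ℝ)..t, NormedSpace.exp ((t - s) • A) (PL (w s)) := by
  have hPvI : IntervalIntegrable (fun s => Real.exp ((t - s) * lam) • Pv (w s)) volume 0 t :=
    ((by fun_prop : Continuous fun s => Real.exp ((t - s) * lam)).continuousOn.smul
      (Pv.continuous.comp_continuousOn hw)).intervalIntegrable
  have hPLI : IntervalIntegrable (fun s => NormedSpace.exp ((t - s) • A) (PL (w s))) volume 0 t :=
    have hexp : Continuous (NormedSpace.exp : (E →L[ℝ] E) → E →L[ℝ] E) :=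
      continuous_iff_continuousAt.2 fun B => (NormedSpace.exp_analytic (𝕂 := ℝ) B).continuousAt
    ((hexp.comp (by fun_prop : Continuous fun s : ℝ => (t - s) • A)).continuousOn.clm_apply
      (PL.continuous.comp_continuousOn hw)).intervalIntegrable
  have hsplit : ∀ s, NormedSpace.exp ((t - s) • A) (w s) =
      Real.exp ((t - s) * lam) • Pv (w s) + NormedSpace.exp ((t - s) • A) (PL (w s)) := fun s => by
    rw [← exp_smul_apply_of_apply_eq_smul (hAPv (w s)), ← map_add, hsum]
  simp_rw [hsplit]
  rw [intervalIntegral.integral_add hPvI hPLI, smul_add, ← intervalIntegral.integral_smul]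
  congr 1
  refine intervalIntegral.integral_congr fun s _ => ?_
  simp only [smul_smul, ← Real.exp_add]
  ring_nf

theorem integrableOn_and_exists_norm_exp_neg_mul_smul_integral_exp_smul_apply_sub_le
    {A Pv PL : E →L[ℝ] E} {L : Submodule ℝ E} {lam Δ C₂ γ C : ℝ}
    (hΔ : 0 < Δ) (hC₂ : 0 ≤ C₂) (hγ : 0 < γ)
    (hAPv : ∀ z, A (Pv z) = lam • Pv z) (hPL : ∀ z, PL z ∈ L) (hsum : ∀ z, Pv z + PL z = z)
    (hLdecay : ∀ u ∈ L, ∀ τ ≥ (0:ℝ),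
      ‖NormedSpace.exp (τ • A) u‖ ≤ C₂ * Real.exp ((lam - Δ) * τ) * ‖u‖)
    {w : ℝ → E} (hwc : ContinuousOn w (Ici 0))
    (hwb : ∀ s ≥ (0:ℝ), ‖w s‖ ≤ C * Real.exp ((lam - γ) * s)) :
    IntegrableOn (fun s => Real.exp (-lam * s) • Pv (w s)) (Ioi 0) ∧
    ∃ ρ > (0:ℝ), ∃ C' : ℝ, ∀ t ≥ (0:ℝ),
      ‖Real.exp (-lam * t) • (∫ s in (0:ℝ)..t, NormedSpace.exp ((t - s) • A) (w s)) -
        ∫ s in Ioi (0:ℝ), Real.exp (-lam * s) • Pv (w s)‖ ≤ C' * Real.exp (-ρ * t) := by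
  have hC : 0 ≤ C := by simpa using (norm_nonneg _).trans (hwb 0 le_rfl)
  have hm : 0 < min Δ γ := lt_min hΔ hγ
  have hPvb : ∀ s ≥ (0:ℝ), ‖Real.exp (-lam * s) • Pv (w s)‖ ≤ ‖Pv‖ * C * Real.exp (-γ * s) :=
    fun s hs => calc
      ‖Real.exp (-lam * s) • Pv (w s)‖
          ≤ Real.exp (-lam * s) * (‖Pv‖ * (C * Real.exp ((lam - γ) * s))) := by
        rw [norm_smul, Real.norm_of_nonneg (Real.exp_pos _).le]
        gcongr
        exact Pv.le_of_opNorm_le_of_le le_rfl (hwb s hs)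
      _ = ‖Pv‖ * C * Real.exp (-γ * s) := by
        rw [mul_left_comm, mul_left_comm _ C, ← mul_assoc, ← Real.exp_add]; ring_nf
  have hPLb : ∀ s ≥ (0:ℝ), ‖PL (w s)‖ ≤ ‖PL‖ * C * Real.exp ((lam - γ) * s) := fun s hs =>
    mul_assoc ‖PL‖ C _ ▸ PL.le_of_opNorm_le_of_le le_rfl (hwb s hs)
  have hint : IntegrableOn (fun s => Real.exp (-lam * s) • Pv (w s)) (Ioi 0) :=
    integrableOn_Ioi_of_norm_le_mul_exp hγ
      ((by fun_prop : Continuous fun s => Real.exp (-lam * s)).continuousOn.smul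
        (Pv.continuous.comp_continuousOn hwc)) hPvb
  refine ⟨hint, min Δ γ / 2, by positivity, C₂ * (‖PL‖ * C) * (2 / min Δ γ) + ‖Pv‖ * C / γ,
    fun t ht => ?_⟩
  rw [exp_neg_mul_smul_integral_exp_smul_apply hAPv hsum
      (hwc.mono (uIcc_of_le ht ▸ Icc_subset_Ici_self)),
    ← integral_interval_add_Ioi hint (hint.mono_set (Ioi_subset_Ioi ht)), add_sub_add_left_eq_sub]
  calc _ ≤ _ := norm_sub_le _ _
    _ ≤ C₂ * (‖PL‖ * C) * (2 / min Δ γ * Real.exp (-(min Δ γ / 2) * t)) +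
        ‖Pv‖ * C / γ * Real.exp (-γ * t) := by
      gcongr
      · exact (norm_exp_neg_mul_smul_integral_exp_smul_apply_le hC₂ hLdecay (fun s => hPL (w s))
          hPLb ht).trans (mul_le_mul_of_nonneg_left (mul_exp_neg_mul_le hm t) (by positivity))
      · exact norm_setIntegral_Ioi_le_of_norm_le_mul_exp hγ fun s hs => hPvb s (ht.trans hs)
    _ ≤ C₂ * (‖PL‖ * C) * (2 / min Δ γ * Real.exp (-(min Δ γ / 2) * t)) +
        ‖Pv‖ * C / γ * Real.exp (-(min Δ γ / 2) * t) := by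
      gcongr
      linarith [min_le_right Δ γ]
    _ = _ := by ring

end

theorem stmt6_general {d : ℕ} (lam Δ C₂ C₃ μ K α : ℝ)
    (hΔ : 0 < Δ) (hC₂ : 0 < C₂) (hαμ : α < μ)
    (v : EuclideanSpace ℝ (Fin d))
    (A : EuclideanSpace ℝ (Fin d) →L[ℝ] EuclideanSpace ℝ (Fin d))
    (hAv : A v = lam • v)
    (L : Submodule ℝ (EuclideanSpace ℝ (Fin d)))
    (hLdecay : ∀ u ∈ L, ∀ t ≥ (0:ℝ),
      ‖NormedSpace.exp (t • A) u‖ ≤ C₂ * Real.exp ((lam - Δ) * t) * ‖u‖)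
    (Pv PL : EuclideanSpace ℝ (Fin d) →L[ℝ] EuclideanSpace ℝ (Fin d))
    (hPv : ∀ z, Pv z ∈ Submodule.span ℝ {v}) (hPL : ∀ z, PL z ∈ L)
    (hsum : ∀ z, Pv z + PL z = z)
    (A' : ℝ → (EuclideanSpace ℝ (Fin d) →L[ℝ] EuclideanSpace ℝ (Fin d)))
    (hA'c : ContinuousOn A' (Ici 0))
    (hA'decay : ∀ s ≥ (0:ℝ), ‖A' s - A‖ ≤ C₃ * Real.exp (-μ * s))
    (Y : ℝ → EuclideanSpace ℝ (Fin d)) (hYc : Continuous Y)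
    (hYgrowth : ∀ s ≥ (0:ℝ), ‖Y s‖ ≤ K * Real.exp ((lam + α) * s)) :
    IntegrableOn
      (fun s => Real.exp (-lam * s) • Pv ((A' s - A) (Y s))) (Ioi 0) ∧
    ∃ ρ > (0:ℝ), ∃ C' : ℝ, ∀ t ≥ (0:ℝ),
      ‖Real.exp (-lam * t) •
          (∫ s in (0:ℝ)..t, (NormedSpace.exp ((t - s) • A)) ((A' s - A) (Y s))) -
        ∫ s in Ioi (0:ℝ), Real.exp (-lam * s) • Pv ((A' s - A) (Y s))‖
        ≤ C' * Real.exp (-ρ * t) := by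
  have hAPv : ∀ z, A (Pv z) = lam • Pv z := fun z => by
    obtain ⟨c, hc⟩ := Submodule.mem_span_singleton.1 (hPv z)
    rw [← hc, map_smul, hAv, smul_comm]
  have hwb : ∀ s ≥ (0:ℝ), ‖(A' s - A) (Y s)‖ ≤ C₃ * K * Real.exp ((lam - (μ - α)) * s) :=
    fun s hs => calc
      ‖(A' s - A) (Y s)‖ ≤ C₃ * Real.exp (-μ * s) * (K * Real.exp ((lam + α) * s)) :=
        (A' s - A).le_of_opNorm_le_of_le (hA'decay s hs) (hYgrowth s hs)
      _ = C₃ * K * Real.exp ((lam - (μ - α)) * s) := by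
        rw [mul_mul_mul_comm, ← Real.exp_add]; ring_nf
  exact integrableOn_and_exists_norm_exp_neg_mul_smul_integral_exp_smul_apply_sub_le hΔ hC₂.le
    (sub_pos.2 hαμ) hAPv hPL hsum hLdecay
    ((hA'c.sub continuousOn_const).clm_apply hYc.continuousOn) hwb

/-- Deterministic core of the convergence of `e^{−λt} Y(t)`: with
`D(t) = ∫₀ᵗ e^{(t−s)A} (A(s) − A) Y(s) ds`, the integral
`I = ∫₀^∞ e^{−λs} Π_v (A(s) − A) Y(s) ds` converges absolutely and
`‖e^{−λt} D(t) − I‖ ≤ C' e^{−ρt}` for some `ρ > 0`, `C'` and all `t ≥ 0`. -/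
theorem stmt6 {d : ℕ} (lam Δ C₂ C₃ μ K α : ℝ)
    (hlam : 0 < lam) (hΔ : 0 < Δ) (hC₂ : 0 < C₂) (hC₃ : 0 ≤ C₃) (hμ : 0 < μ)
    (hK : 0 ≤ K) (hα : 0 < α) (hαμ : α < μ)
    (v : EuclideanSpace ℝ (Fin d)) (hv : ‖v‖ = 1)
    (A : EuclideanSpace ℝ (Fin d) →L[ℝ] EuclideanSpace ℝ (Fin d))
    (hAv : A v = lam • v)
    (L : Submodule ℝ (EuclideanSpace ℝ (Fin d)))
    (hAL : ∀ u ∈ L, A u ∈ L)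
    (hcompl : IsCompl (Submodule.span ℝ {v}) L)
    (hLdecay : ∀ u ∈ L, ∀ t ≥ (0:ℝ),
      ‖NormedSpace.exp (t • A) u‖ ≤ C₂ * Real.exp ((lam - Δ) * t) * ‖u‖)
    (Pv PL : EuclideanSpace ℝ (Fin d) →L[ℝ] EuclideanSpace ℝ (Fin d))
    (hPv : ∀ z, Pv z ∈ Submodule.span ℝ {v}) (hPL : ∀ z, PL z ∈ L)
    (hsum : ∀ z, Pv z + PL z = z)
    (A' : ℝ → (EuclideanSpace ℝ (Fin d) →L[ℝ] EuclideanSpace ℝ (Fin d)))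
    (hA'c : ContinuousOn A' (Ici 0))
    (hA'decay : ∀ s ≥ (0:ℝ), ‖A' s - A‖ ≤ C₃ * Real.exp (-μ * s))
    (Y : ℝ → EuclideanSpace ℝ (Fin d)) (hYc : Continuous Y)
    (hYgrowth : ∀ s ≥ (0:ℝ), ‖Y s‖ ≤ K * Real.exp ((lam + α) * s)) :
    IntegrableOn
      (fun s => Real.exp (-lam * s) • Pv ((A' s - A) (Y s))) (Ioi 0) ∧
    ∃ ρ > (0:ℝ), ∃ C' : ℝ, ∀ t ≥ (0:ℝ),
      ‖Real.exp (-lam * t) •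
          (∫ s in (0:ℝ)..t, (NormedSpace.exp ((t - s) • A)) ((A' s - A) (Y s))) -
        ∫ s in Ioi (0:ℝ), Real.exp (-lam * s) • Pv ((A' s - A) (Y s))‖
        ≤ C' * Real.exp (-ρ * t) :=
  stmt6_general lam Δ C₂ C₃ μ K α hΔ hC₂ hαμ v A hAv L hLdecay Pv PL hPv hPL hsum A' hA'c hA'decay Y
    hYc hYgrowth
end

section
/- Let A(·) : [0,∞) → ℝ^{d×d} be continuous with A(t) → A as t → ∞, where every complex eigenvalue of the limit matrix A has real part at most λ. For each s ≥ 0 let Φ_s(·) be the fundamental matrix solution of d/dt Φ_s(t) = A(t) Φ_s(t) with Φ_s(s) = I. Then for every α > 0 there is a constant K_α such that ‖Φ_s(t)‖ ≤ K_α e^{(λ+α)(t−s)} for all t ≥ s ≥ 0. -/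
/-!
On each generalized eigenspace of the complexified limit matrix `A`, `e^{tA}` acts as `e^{tμ}`
times a polynomial in `t`; hence `‖e^{tA}‖ ≤ C e^{(λ+β)t}` for `t ≥ 0`, for every `β > 0`.
Variation of constants writes `Φ_s(t) = e^{(t-s)A} + ∫_s^t e^{(t-u)A} (A(u) - A) Φ_s(u) du`, and
Gronwall's inequality for `e^{-(λ+β)(t-s)} ‖Φ_s(t)‖` gives
`‖Φ_s(t)‖ ≤ C e^{(λ+β)(t-s)} exp (C ∫_s^t ‖A(u) - A‖ du)`. Since `A(u) → A`, the integral
`C ∫_s^t ‖A(u) - A‖ du` grows at most like `β (t - s) + const`; take `β = α / 2`.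
-/

open NormedSpace Filter Set Finset Topology

namespace GrowthBound

theorem norm_pow_apply_le {𝕜 F : Type*} [NontriviallyNormedField 𝕜] [NormedAddCommGroup F]
    [NormedSpace 𝕜 F] (T : F →L[𝕜] F) (n : ℕ) (x : F) : ‖(T ^ n) x‖ ≤ ‖T‖ ^ n * ‖x‖ := by
  induction n with
  | zero => simp
  | succ n ih =>
    rw [pow_succ', mul_apply_eq_comp, pow_succ', mul_assoc]
    exact (T.le_opNorm _).trans (mul_le_mul_of_nonneg_left ih (norm_nonneg T))

theorem exists_forall_opNorm_le_of_forall_apply {𝕜 F ι : Type*} [NontriviallyNormedField 𝕜]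
    [CompleteSpace 𝕜] [NormedAddCommGroup F] [NormedSpace 𝕜 F] [FiniteDimensional 𝕜 F]
    {U : ι → F →L[𝕜] F} {g : ι → ℝ} {s : Set ι} (hg : ∀ i ∈ s, 0 ≤ g i)
    (h : ∀ x, ∃ C, ∀ i ∈ s, ‖U i x‖ ≤ C * g i) : ∃ C > 0, ∀ i ∈ s, ‖U i‖ ≤ C * g i := by
  let v := Module.finBasis 𝕜 F
  obtain ⟨C₀, hC₀, hopNorm⟩ := v.exists_opNorm_le (F := F)
  choose C hC using fun j => h (v j)
  refine ⟨C₀ * (∑ j, |C j| + 1), by positivity, fun i hi => ?_⟩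
  rw [mul_assoc]
  refine hopNorm (by have := hg i hi; positivity) fun j => ?_
  calc ‖U i (v j)‖ ≤ C j * g i := hC j i hi
    _ ≤ (∑ j, |C j| + 1) * g i := by
      gcongr
      · exact hg i hi
      · calc C j ≤ |C j| := le_abs_self _
          _ ≤ ∑ j, |C j| := single_le_sum (fun j _ => abs_nonneg (C j)) (mem_univ j)
          _ ≤ ∑ j, |C j| + 1 := le_add_of_nonneg_right zero_le_one

section GeneralizedEigenvectors

variable {E : Type*} [NormedAddCommGroup E] [NormedSpace ℂ E]

theorem exp_smul_apply_eq_sum_of_pow_sub_smul_apply_eq_zero [CompleteSpace E] {f : E →L[ℂ] E}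
    {μ : ℂ} {x : E} {k : ℕ} (hk : ((f - μ • 1) ^ k) x = 0) (t : ℂ) :
    exp (t • f) x =
      Complex.exp (t * μ) • ∑ n ∈ range k, (t ^ n / n.factorial) • ((f - μ • 1) ^ n) x := by
  let _ : NormedAlgebra ℚ (E →L[ℂ] E) := .restrictScalars ℚ ℂ _
  set N := f - μ • 1
  have hsplit : t • f = (t * μ) • (1 : E →L[ℂ] E) + t • N := by
    simp only [N, smul_sub, smul_smul]; abel
  have hexp : exp (t • f) = Complex.exp (t * μ) • exp (t • N) := by
    rw [hsplit, exp_add_of_commute ((Commute.one_left _).smul_left _),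
      ← Algebra.algebraMap_eq_smul_one, ← algebraMap_exp_comm, Complex.exp_eq_exp_ℂ,
      Algebra.algebraMap_eq_smul_one, smul_mul_assoc, one_mul]
  have hN : ∀ n ≥ k, (N ^ n) x = 0 := fun n hn => by
    rw [← Nat.sub_add_cancel hn, pow_add, mul_apply_eq_comp, hk, map_zero]
  rw [hexp, smul_apply, exp_eq_tsum ℂ]
  congr 1
  refine ((ContinuousLinearMap.apply ℂ E x).map_tsum (expSeries_summable' (t • N))).trans ?_
  refine (tsum_eq_sum fun n hn => ?_).trans (sum_congr rfl fun n _ => ?_)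
  · simp [smul_pow, hN n (by simpa using hn)]
  · simp [smul_pow, smul_smul, div_eq_inv_mul]

theorem norm_exp_smul_apply_le_of_pow_sub_smul_apply_eq_zero [CompleteSpace E] {f : E →L[ℂ] E}
    {μ : ℂ} {x : E} {k : ℕ} (hk : ((f - μ • 1) ^ k) x = 0) {β : ℝ} (hβ : 0 < β) {t : ℝ} (ht : 0 ≤ t) :
    ‖exp ((t : ℂ) • f) x‖ ≤
      (∑ n ∈ range k, (‖f - μ • 1‖ / β) ^ n * ‖x‖) * Real.exp ((μ.re + β) * t) := by
  rw [exp_smul_apply_eq_sum_of_pow_sub_smul_apply_eq_zero hk, norm_smul, Complex.norm_exp,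
    Complex.re_ofReal_mul, add_mul, Real.exp_add, mul_comm μ.re, mul_comm (∑ n ∈ _, _), mul_assoc,
    mul_sum]
  refine mul_le_mul_of_nonneg_left ((norm_sum_le _ _).trans (sum_le_sum fun n _ => ?_))
    (Real.exp_nonneg _)
  have hfac : t ^ n / n.factorial * β ^ n ≤ Real.exp (β * t) := by
    simpa [mul_pow, mul_comm, mul_div_assoc] using
      Real.pow_div_factorial_le_exp (x := β * t) (by positivity) n
  calc ‖((t : ℂ) ^ n / n.factorial) • ((f - μ • 1) ^ n) x‖
      ≤ t ^ n / n.factorial * (‖f - μ • 1‖ ^ n * ‖x‖) := by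
        rw [norm_smul, norm_div, norm_pow, Complex.norm_real, Complex.norm_natCast,
          Real.norm_of_nonneg ht]
        gcongr
        exact norm_pow_apply_le _ _ _
    _ = t ^ n / n.factorial * β ^ n * ((‖f - μ • 1‖ / β) ^ n * ‖x‖) := by
        rw [div_pow]
        field_simp
    _ ≤ Real.exp (β * t) * ((‖f - μ • 1‖ / β) ^ n * ‖x‖) := by gcongr

theorem exists_norm_exp_smul_le [FiniteDimensional ℂ E] (f : E →L[ℂ] E) {lam β : ℝ}
    (hβ : 0 < β) (hspec : ∀ μ : ℂ, Module.End.HasEigenvalue (f : Module.End ℂ E) μ → μ.re ≤ lam) :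
    ∃ C > 0, ∀ t : ℝ, 0 ≤ t → ‖exp ((t : ℂ) • f)‖ ≤ C * Real.exp ((lam + β) * t) := by
  refine exists_forall_opNorm_le_of_forall_apply (s := Ici 0) (fun t _ => (Real.exp_pos _).le)
    fun x => ?_
  have hx : x ∈ ⨆ μ, Module.End.maxGenEigenspace (f : Module.End ℂ E) μ := by
    rw [Module.End.iSup_maxGenEigenspace_eq_top]; trivial
  refine Submodule.iSup_induction _ (motive := fun x => ∃ C, ∀ t : ℝ, 0 ≤ t →
    ‖exp ((t : ℂ) • f) x‖ ≤ C * Real.exp ((lam + β) * t)) hx ?_ ⟨0, by simp⟩ ?_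
  · intro μ y hy
    obtain ⟨k, hk⟩ := (Module.End.mem_maxGenEigenspace (f : Module.End ℂ E) μ y).mp hy
    by_cases hy0 : y = 0
    · exact ⟨0, by simp [hy0]⟩
    have hμ : Module.End.HasEigenvalue (f : Module.End ℂ E) μ :=
      (Module.End.HasUnifEigenvector.hasUnifEigenvalue ⟨hy, hy0⟩).lt zero_lt_one
    rw [show (f : Module.End ℂ E) - μ • 1 = ↑(f - μ • 1) by ext; simp,
      ← ContinuousLinearMap.toLinearMap_pow] at hk
    refine ⟨∑ n ∈ range k, (‖f - μ • 1‖ / β) ^ n * ‖y‖, fun t ht =>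
      (norm_exp_smul_apply_le_of_pow_sub_smul_apply_eq_zero hk hβ ht).trans ?_⟩
    gcongr
    exact hspec μ hμ
  · rintro y z ⟨C, hC⟩ ⟨D, hD⟩
    refine ⟨C + D, fun t ht => ?_⟩
    rw [map_add, add_mul]
    exact (norm_add_le _ _).trans (add_le_add (hC t ht) (hD t ht))

end GeneralizedEigenvectors

section Complexification

variable (n : Type*) [Fintype n] [DecidableEq n]

theorem charpoly_toEuclideanCLM {𝕜 : Type*} [RCLike 𝕜] (M : Matrix n n 𝕜) :
    (Matrix.toEuclideanCLM (n := n) (𝕜 := 𝕜) M).toLinearMap.charpoly = M.charpoly := by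
  rw [Matrix.coe_toEuclideanCLM_eq_toEuclideanLin, Matrix.toEuclideanLin_eq_toLin_orthonormal,
    Matrix.charpoly_toLin]

noncomputable def complexify :
    (EuclideanSpace ℝ n →L[ℝ] EuclideanSpace ℝ n) →ₐ[ℝ]
      (EuclideanSpace ℂ n →L[ℂ] EuclideanSpace ℂ n) :=
  ((Matrix.toEuclideanCLM (n := n) (𝕜 := ℂ)).toAlgEquiv.toAlgHom.restrictScalars ℝ).comp
    ((Algebra.ofId ℝ ℂ).mapMatrix.comp
      (Matrix.toEuclideanCLM (n := n) (𝕜 := ℝ)).symm.toAlgEquiv.toAlgHom)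

variable {n}

theorem complexify_injective : Function.Injective (complexify n) :=
  (Matrix.toEuclideanCLM (n := n) (𝕜 := ℂ)).injective.comp <|
    (Matrix.map_injective Complex.ofReal_injective).comp
      (Matrix.toEuclideanCLM (n := n) (𝕜 := ℝ)).symm.injective

theorem charpoly_complexify (a : EuclideanSpace ℝ n →L[ℝ] EuclideanSpace ℝ n) :
    (complexify n a).toLinearMap.charpoly = a.toLinearMap.charpoly.map (algebraMap ℝ ℂ) := by
  obtain ⟨M, rfl⟩ : ∃ M, Matrix.toEuclideanCLM (n := n) (𝕜 := ℝ) M = a :=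
    ⟨_, StarAlgEquiv.apply_symm_apply _ a⟩
  have hM : complexify n (Matrix.toEuclideanCLM (n := n) (𝕜 := ℝ) M) =
      Matrix.toEuclideanCLM (n := n) (𝕜 := ℂ) (M.map (algebraMap ℝ ℂ)) := by
    simp only [complexify, StarAlgEquiv.toAlgEquiv_symm, AlgHom.coe_comp,
      AlgHom.coe_restrictScalars', AlgEquiv.coe_toAlgHom, StarAlgEquiv.coe_toAlgEquiv,
      StarAlgEquiv.coe_symm_toAlgEquiv, Function.comp_apply, StarAlgEquiv.symm_apply_apply,
      AlgHom.mapMatrix_apply]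
    rfl
  rw [hM, charpoly_toEuclideanCLM, charpoly_toEuclideanCLM, Matrix.charpoly_map]

end Complexification

theorem exists_norm_exp_smul_le_of_isRoot_charpoly {n : Type*} [Fintype n] [DecidableEq n]
    (a : EuclideanSpace ℝ n →L[ℝ] EuclideanSpace ℝ n) {lam β : ℝ} (hβ : 0 < β)
    (hspec : ∀ μ : ℂ, (a.toLinearMap.charpoly.map (algebraMap ℝ ℂ)).IsRoot μ → μ.re ≤ lam) :
    ∃ C > 0, ∀ t : ℝ, 0 ≤ t → ‖exp (t • a)‖ ≤ C * Real.exp ((lam + β) * t) := by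
  let _ : NormedAlgebra ℚ (EuclideanSpace ℝ n →L[ℝ] EuclideanSpace ℝ n) :=
    .restrictScalars ℚ ℝ _
  let _ : NormedAlgebra ℚ (EuclideanSpace ℂ n →L[ℂ] EuclideanSpace ℂ n) :=
    .restrictScalars ℚ ℂ _
  let φ := complexify n
  obtain ⟨K, hK0, hK⟩ := φ.toLinearMap.exists_antilipschitzWith
    (LinearMap.ker_eq_bot.mpr complexify_injective)
  obtain ⟨C, hC0, hC⟩ := exists_norm_exp_smul_le (φ a) hβ fun μ hμ => hspec μ <| by
    rwa [← charpoly_complexify, ← Module.End.hasEigenvalue_iff_isRoot_charpoly]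
  refine ⟨K * C, by positivity, fun t ht => ?_⟩
  have hφexp : φ (exp (t • a)) = exp ((t : ℂ) • φ a) := by
    rw [map_exp φ (LinearMap.continuous_of_finiteDimensional φ.toLinearMap), map_smul]
    rfl
  calc ‖exp (t • a)‖ ≤ K * ‖φ (exp (t • a))‖ := hK.le_mul_norm (map_zero φ) _
    _ ≤ K * (C * Real.exp ((lam + β) * t)) := by rw [hφexp]; gcongr; exact hC t ht
    _ = K * C * Real.exp ((lam + β) * t) := by ring

section Primitive

variable {F : Type*} [NormedAddCommGroup F] [NormedSpace ℝ F] {f : ℝ → F} {s t : ℝ}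

theorem continuousOn_integral_of_continuousOn_Icc (hst : s ≤ t) (hf : ContinuousOn f (Icc s t)) :
    ContinuousOn (fun τ => ∫ u in s..τ, f u) (Icc s t) := by
  simpa [uIcc_of_le hst] using intervalIntegral.continuousOn_primitive_interval'
    (hf.intervalIntegrable_of_Icc hst) left_mem_uIcc

theorem hasDerivAt_integral_of_continuousOn_Icc [CompleteSpace F] (hf : ContinuousOn f (Icc s t))
    {x : ℝ} (hx : x ∈ Ioo s t) : HasDerivAt (fun τ => ∫ u in s..τ, f u) (f x) x :=
  intervalIntegral.integral_hasDerivAt_right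
    ((hf.mono (Icc_subset_Icc_right hx.2.le)).intervalIntegrable_of_Icc hx.1.le)
    ((hf.mono Ioo_subset_Icc_self).stronglyMeasurableAtFilter isOpen_Ioo x hx)
    (hf.continuousAt (Icc_mem_nhds hx.1 hx.2))

end Primitive

theorem le_mul_exp_integral_of_le_add_integral {g h : ℝ → ℝ} {s t c : ℝ} (hst : s ≤ t)
    (hg : ContinuousOn g (Icc s t)) (hh : ContinuousOn h (Icc s t))
    (hh0 : ∀ u ∈ Icc s t, 0 ≤ h u)
    (hle : ∀ τ ∈ Icc s t, g τ ≤ c + ∫ u in s..τ, h u * g u) :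
    g t ≤ c * Real.exp (∫ u in s..t, h u) := by
  -- `h ≥ 0` and `g ≤ c + ∫ h g` make `(c + ∫ h g) e^{-∫ h}` antitone
  set F : ℝ → ℝ := fun τ => (c + ∫ u in s..τ, h u * g u) * Real.exp (-∫ u in s..τ, h u)
  have hF : ∀ x ∈ Ioo s t, HasDerivAt F
      (h x * Real.exp (-∫ u in s..x, h u) * (g x - (c + ∫ u in s..x, h u * g u))) x := by
    intro x hx
    refine (((hasDerivAt_integral_of_continuousOn_Icc (hh.mul hg) hx).const_add c).mul
      (hasDerivAt_integral_of_continuousOn_Icc hh hx).neg.exp).congr_deriv ?_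
    simp only [Pi.mul_apply, Pi.neg_apply]
    ring
  have hanti : AntitoneOn F (Icc s t) := by
    refine antitoneOn_of_hasDerivWithinAt_nonpos (convex_Icc s t)
      (((continuousOn_integral_of_continuousOn_Icc hst (hh.mul hg)).const_add c).mul
        (continuousOn_integral_of_continuousOn_Icc hst hh).neg.rexp)
      (fun x hx => (hF x (by simpa using hx)).hasDerivWithinAt) fun x hx => ?_
    rw [interior_Icc] at hx
    exact mul_nonpos_of_nonneg_of_nonpos
      (mul_nonneg (hh0 x (Ioo_subset_Icc_self hx)) (Real.exp_nonneg _))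
      (sub_nonpos.mpr (hle x (Ioo_subset_Icc_self hx)))
  calc g t ≤ c + ∫ u in s..t, h u * g u := hle t ⟨hst, le_rfl⟩
    _ = F t * Real.exp (∫ u in s..t, h u) := by simp [F, mul_assoc, ← Real.exp_add]
    _ ≤ F s * Real.exp (∫ u in s..t, h u) := by
        gcongr; exact hanti ⟨le_rfl, hst⟩ ⟨hst, le_rfl⟩ hst
    _ = c * Real.exp (∫ u in s..t, h u) := by simp [F]

theorem exists_integral_le_of_tendsto_zero {h : ℝ → ℝ} (hc : ContinuousOn h (Ici 0))
    (hlim : Tendsto h atTop (𝓝 0)) {ε : ℝ} (hε : 0 < ε) :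
    ∃ K, ∀ s t : ℝ, 0 ≤ s → s ≤ t → ∫ u in s..t, h u ≤ ε * (t - s) + K := by
  obtain ⟨T, hT⟩ :=
    eventually_atTop.mp ((hlim.eventually (gt_mem_nhds hε)).and (eventually_ge_atTop 0))
  have hT0 : 0 ≤ T := (hT T le_rfl).2
  obtain ⟨M, hM⟩ := (isCompact_Icc (a := 0) (b := T)).exists_bound_of_continuousOn
    (hc.mono Icc_subset_Ici_self)
  have hM0 : 0 ≤ M := (norm_nonneg _).trans (hM 0 ⟨le_rfl, hT0⟩)
  -- `M e^{T - u}` dominates `h` on `[0, T]` and has integral at most `M e^T` over `[s, ∞)`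
  have hdom : ∀ u, 0 ≤ u → h u ≤ ε + M * Real.exp (T - u) := by
    intro u hu
    rcases le_total u T with huT | huT
    · have h1 : 1 ≤ Real.exp (T - u) := Real.one_le_exp (by linarith)
      have h2 := (le_abs_self _).trans (hM u ⟨hu, huT⟩)
      nlinarith
    · have := (hT u huT).1
      have : 0 ≤ M * Real.exp (T - u) := by positivity
      linarith
  refine ⟨M * Real.exp T, fun s t hs hst => ?_⟩
  calc ∫ u in s..t, h u ≤ ∫ u in s..t, (ε + M * Real.exp (T - u)) :=
        intervalIntegral.integral_mono_on hst
          ((hc.mono fun u (hu : u ∈ uIcc s t) =>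
            hs.trans (by rw [uIcc_of_le hst] at hu; exact hu.1)).intervalIntegrable)
          (Continuous.intervalIntegrable (by fun_prop) s t)
          fun u hu => hdom u (hs.trans hu.1)
    _ = ε * (t - s) + M * (Real.exp (T - s) - Real.exp (T - t)) := by
        rw [intervalIntegral.integral_add intervalIntegrable_const
          (Continuous.intervalIntegrable (by fun_prop) s t),
          intervalIntegral.integral_const, intervalIntegral.integral_const_mul,
          intervalIntegral.integral_comp_sub_left (fun u => Real.exp u), integral_exp,
          smul_eq_mul, mul_comm]
    _ ≤ ε * (t - s) + M * Real.exp T := by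
        gcongr
        exact (sub_le_self _ (Real.exp_nonneg _)).trans (Real.exp_le_exp.mpr (by linarith))

section BanachAlgebra

variable {𝔸 : Type*} [NormedRing 𝔸] [NormedAlgebra ℝ 𝔸] [CompleteSpace 𝔸]

theorem eq_exp_smul_mul_add_integral_of_hasDerivAt {a : 𝔸} {B Y : ℝ → 𝔸} {s τ : ℝ}
    (hsτ : s ≤ τ) (hB : ContinuousOn B (Icc s τ))
    (hY : ∀ u ∈ Icc s τ, HasDerivAt Y (B u * Y u) u) :
    Y τ = exp ((τ - s) • a) * Y s + ∫ u in s..τ, exp ((τ - u) • a) * ((B u - a) * Y u) := by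
  let _ : NormedAlgebra ℚ 𝔸 := .restrictScalars ℚ ℝ 𝔸
  have hderiv : ∀ u ∈ uIcc s τ, HasDerivAt (fun u => exp ((τ - u) • a) * Y u)
      (exp ((τ - u) • a) * ((B u - a) * Y u)) u := by
    intro u hu
    rw [uIcc_of_le hsτ] at hu
    have hexp := (hasDerivAt_exp_smul_const (𝕂 := ℝ) a (τ - u)).scomp u
      ((hasDerivAt_id u).const_sub τ)
    refine (hexp.mul (hY u hu)).congr_deriv ?_
    simp only [mul_sub, sub_mul, mul_assoc, neg_one_smul, neg_mul]
    abel
  have hcont : ContinuousOn (fun u => exp ((τ - u) • a) * ((B u - a) * Y u)) (uIcc s τ) := by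
    rw [uIcc_of_le hsτ]
    exact (exp_continuous.comp (by fun_prop)).continuousOn.mul
      ((hB.sub continuousOn_const).mul fun u hu => (hY u hu).continuousAt.continuousWithinAt)
  rw [intervalIntegral.integral_eq_sub_of_hasDerivAt hderiv hcont.intervalIntegrable]
  simp

theorem norm_le_exp_mul_add_integral_of_hasDerivAt {a : 𝔸} {B Y : ℝ → 𝔸} {s τ C γ : ℝ}
    (hsτ : s ≤ τ) (hB : ContinuousOn B (Icc s τ))
    (hY : ∀ u ∈ Icc s τ, HasDerivAt Y (B u * Y u) u)
    (ha : ∀ r : ℝ, 0 ≤ r → ‖exp (r • a)‖ ≤ C * Real.exp (γ * r)) :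
    ‖Y τ‖ ≤ C * Real.exp (γ * (τ - s)) * ‖Y s‖ +
      ∫ u in s..τ, C * Real.exp (γ * (τ - u)) * (‖B u - a‖ * ‖Y u‖) := by
  have hYc : ContinuousOn Y (Icc s τ) := fun u hu => (hY u hu).continuousAt.continuousWithinAt
  rw [eq_exp_smul_mul_add_integral_of_hasDerivAt hsτ hB hY]
  refine (norm_add_le _ _).trans (add_le_add ?_ ?_)
  · exact (norm_mul_le _ _).trans (by gcongr; exact ha _ (sub_nonneg.mpr hsτ))
  refine intervalIntegral.norm_integral_le_of_norm_le hsτ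
    (Filter.Eventually.of_forall fun u hu => ?_) ?_
  · calc ‖exp ((τ - u) • a) * ((B u - a) * Y u)‖
        ≤ ‖exp ((τ - u) • a)‖ * (‖B u - a‖ * ‖Y u‖) :=
          (norm_mul_le _ _).trans (by gcongr; exact norm_mul_le _ _)
      _ ≤ C * Real.exp (γ * (τ - u)) * (‖B u - a‖ * ‖Y u‖) := by
          gcongr; exact ha _ (sub_nonneg.mpr hu.2)
  · refine ContinuousOn.intervalIntegrable ?_
    rw [uIcc_of_le hsτ]
    exact (by fun_prop : Continuous fun u => C * Real.exp (γ * (τ - u))).continuousOn.mul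
      ((hB.sub continuousOn_const).norm.mul hYc.norm)

theorem norm_le_mul_exp_integral_of_hasDerivAt {a : 𝔸} {B Y : ℝ → 𝔸} {s t C γ : ℝ}
    (hst : s ≤ t) (hB : ContinuousOn B (Icc s t))
    (hY : ∀ u ∈ Icc s t, HasDerivAt Y (B u * Y u) u) (hC : 0 ≤ C)
    (ha : ∀ r : ℝ, 0 ≤ r → ‖exp (r • a)‖ ≤ C * Real.exp (γ * r)) :
    ‖Y t‖ ≤ C * ‖Y s‖ * Real.exp (∫ u in s..t, C * ‖B u - a‖) * Real.exp (γ * (t - s)) := by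
  have hYc : ContinuousOn Y (Icc s t) := fun u hu => (hY u hu).continuousAt.continuousWithinAt
  -- Gronwall's inequality for `e^{-γ (u - s)} ‖Y u‖`
  set g : ℝ → ℝ := fun u => Real.exp (-(γ * (u - s))) * ‖Y u‖
  have hexp : ∀ τ u, Real.exp (γ * (τ - u)) =
      Real.exp (γ * (τ - s)) * Real.exp (-(γ * (u - s))) := fun τ u => by
    rw [← Real.exp_add]; ring_nf
  have hle : ∀ τ ∈ Icc s t, g τ ≤ C * ‖Y s‖ + ∫ u in s..τ, C * ‖B u - a‖ * g u := by
    intro τ hτ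
    have hsub : Icc s τ ⊆ Icc s t := Icc_subset_Icc_right hτ.2
    have h := norm_le_exp_mul_add_integral_of_hasDerivAt hτ.1 (hB.mono hsub)
      (fun u hu => hY u (hsub hu)) ha
    have hrhs : C * Real.exp (γ * (τ - s)) * ‖Y s‖ +
        ∫ u in s..τ, C * Real.exp (γ * (τ - u)) * (‖B u - a‖ * ‖Y u‖) =
        Real.exp (γ * (τ - s)) * (C * ‖Y s‖ + ∫ u in s..τ, C * ‖B u - a‖ * g u) := by
      rw [mul_add, ← intervalIntegral.integral_const_mul]
      congr 1
      · ring
      · refine intervalIntegral.integral_congr fun u _ => ?_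
        simp only [g]
        rw [hexp τ u]
        ring
    calc g τ ≤ Real.exp (-(γ * (τ - s))) *
          (Real.exp (γ * (τ - s)) * (C * ‖Y s‖ + ∫ u in s..τ, C * ‖B u - a‖ * g u)) := by
          rw [← hrhs]; exact mul_le_mul_of_nonneg_left h (Real.exp_nonneg _)
      _ = C * ‖Y s‖ + ∫ u in s..τ, C * ‖B u - a‖ * g u := by
          rw [← mul_assoc, ← Real.exp_add, neg_add_cancel, Real.exp_zero, one_mul]
  have hg := le_mul_exp_integral_of_le_add_integral (g := g) (h := fun u => C * ‖B u - a‖) hst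
    ((by fun_prop : Continuous fun u => Real.exp (-(γ * (u - s)))).continuousOn.mul hYc.norm)
    (continuousOn_const.mul (hB.sub continuousOn_const).norm)
    (fun u _ => mul_nonneg hC (norm_nonneg _)) hle
  calc ‖Y t‖ = g t * Real.exp (γ * (t - s)) := by
        simp only [g]
        rw [mul_comm, ← mul_assoc, ← Real.exp_add, add_neg_cancel, Real.exp_zero, one_mul]
    _ ≤ _ := by gcongr

end BanachAlgebra

end GrowthBound

open GrowthBound

/-- Growth bound on the fundamental matrix: if `A(t) → A` as `t → ∞`, where
every complex eigenvalue of `A` has real part `≤ λ`, and `Φ_s` solves `Φ_s' (t) = A(t) Φ_s(t)`,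
`Φ_s(s) = I`, then for every `α > 0` there is `K_α` with
`‖Φ_s(t)‖ ≤ K_α e^{(λ+α)(t−s)}` for all `t ≥ s ≥ 0`. -/
theorem stmt7 {d : ℕ} (lam : ℝ)
    (Alim : EuclideanSpace ℝ (Fin d) →L[ℝ] EuclideanSpace ℝ (Fin d))
    (A : ℝ → (EuclideanSpace ℝ (Fin d) →L[ℝ] EuclideanSpace ℝ (Fin d)))
    (hAc : ContinuousOn A (Ici 0))
    (hAlim : Tendsto A atTop (nhds Alim))
    (hspec : ∀ μ : ℂ,
      ((Alim.toLinearMap.charpoly.map (algebraMap ℝ ℂ)).IsRoot μ) → μ.re ≤ lam)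
    (Φ : ℝ → ℝ → (EuclideanSpace ℝ (Fin d) →L[ℝ] EuclideanSpace ℝ (Fin d)))
    (hΦinit : ∀ s ≥ (0:ℝ), Φ s s = 1)
    (hΦode : ∀ s ≥ (0:ℝ), ∀ t ≥ s, HasDerivAt (fun u => Φ s u) ((A t).comp (Φ s t)) t) :
    ∀ α > (0:ℝ), ∃ Kα > (0:ℝ), ∀ s t : ℝ, 0 ≤ s → s ≤ t →
      ‖Φ s t‖ ≤ Kα * Real.exp ((lam + α) * (t - s)) := by
  intro α hα
  obtain ⟨C, hC0, hC⟩ := exists_norm_exp_smul_le_of_isRoot_charpoly Alim (half_pos hα) hspec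
  obtain ⟨K, hK⟩ := exists_integral_le_of_tendsto_zero (h := fun u => C * ‖A u - Alim‖)
    (continuousOn_const.mul (hAc.sub continuousOn_const).norm)
    (by simpa using ((hAlim.sub_const Alim).norm).const_mul C) (half_pos hα)
  refine ⟨C * Real.exp K, by positivity, fun s t hs hst => ?_⟩
  calc ‖Φ s t‖ ≤ C * ‖Φ s s‖ * Real.exp (∫ u in s..t, C * ‖A u - Alim‖) *
        Real.exp ((lam + α / 2) * (t - s)) :=
        norm_le_mul_exp_integral_of_hasDerivAt hst (hAc.mono fun u hu => hs.trans hu.1)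
          (fun u hu => hΦode s hs u hu.1) hC0.le hC
    _ ≤ C * 1 * Real.exp (α / 2 * (t - s) + K) * Real.exp ((lam + α / 2) * (t - s)) := by
        gcongr
        · rw [hΦinit s hs]; exact ContinuousLinearMap.norm_id_le
        · exact hK s t hs hst
    _ = C * Real.exp K * Real.exp ((lam + α) * (t - s)) := by
        rw [mul_one, mul_assoc, ← Real.exp_add, mul_assoc, ← Real.exp_add]
        ring_nf
end

section
/- Let Y : [0,1] → ℝ^d be continuous, let R > 0 and ρ > 1. For n ≥ 0 let D_n = {k 2^{−n} : k = 0, 1, …, 2^n}, and for n ≥ 1 and t ∈ D_n let t_- denote the largest element of D_{n−1} with t_- ≤ t. If ‖Y(0)‖ < R(ρ−1)/ρ and ‖Y(t) − Y(t_-)‖ < R(ρ−1)/ρ^{n+1} for every n ≥ 1 and every t ∈ D_n, then sup_{s∈[0,1]} ‖Y(s)‖ ≤ R. -/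
open Filter Set Topology Finset

/-! Chaining each dyadic point `k/2ⁿ` back to `0` through its ancestors bounds `‖Y(k/2ⁿ)‖` by the
partial sum `R(ρ-1)(ρ⁻¹ + ⋯ + ρ⁻ⁿ⁻¹) = R(1 - ρ⁻ⁿ⁻¹) ≤ R`. This only works for `k < 2ⁿ`: the
point `1` is its own parent, so the chain from it never reaches `0`. The dyadic points with
`k < 2ⁿ` are still dense in `[0,1]`, so continuity extends the bound to all of `[0,1]`. -/

lemma norm_dyadic_le_sum {E : Type*} [SeminormedAddCommGroup E] (Y : ℝ → E) (c : ℕ → ℝ)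
    (h0 : ‖Y 0‖ ≤ c 0)
    (hinc : ∀ n k : ℕ, k < 2 ^ (n + 1) →
      ‖Y ((k : ℝ) / 2 ^ (n + 1)) - Y ((↑(k / 2) : ℝ) / 2 ^ n)‖ ≤ c (n + 1)) :
    ∀ n k : ℕ, k < 2 ^ n → ‖Y ((k : ℝ) / 2 ^ n)‖ ≤ ∑ i ∈ range (n + 1), c i := by
  intro n
  induction n with
  | zero =>
    intro k hk
    obtain rfl : k = 0 := by simpa using hk
    simpa using h0
  | succ n ih =>
    intro k hk
    have hparent : k / 2 < 2 ^ n := by omega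
    calc ‖Y ((k : ℝ) / 2 ^ (n + 1))‖
        ≤ ‖Y ((k : ℝ) / 2 ^ (n + 1)) - Y ((↑(k / 2) : ℝ) / 2 ^ n)‖
          + ‖Y ((↑(k / 2) : ℝ) / 2 ^ n)‖ := norm_le_norm_sub_add _ _
      _ ≤ c (n + 1) + ∑ i ∈ range (n + 1), c i := add_le_add (hinc n k hk) (ih _ hparent)
      _ = ∑ i ∈ range (n + 2), c i := by rw [sum_range_succ _ (n + 1), add_comm]

lemma sum_range_mul_sub_one_div_pow_succ {R ρ : ℝ} (hρ : ρ ≠ 0) (m : ℕ) :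
    ∑ i ∈ range m, R * (ρ - 1) / ρ ^ (i + 1) = R * (1 - (ρ ^ m)⁻¹) := by
  induction m with
  | zero => simp
  | succ m ih =>
    rw [sum_range_succ, ih]
    field_simp
    ring

lemma tendsto_floor_mul_two_pow_div {s : ℝ} (hs : 0 ≤ s) :
    Tendsto (fun n : ℕ => (⌊s * 2 ^ n⌋₊ : ℝ) / 2 ^ n) atTop (𝓝 s) :=
  (tendsto_nat_floor_mul_div_atTop hs).comp (tendsto_pow_atTop_atTop_of_one_lt one_lt_two)

lemma ContinuousOn.mem_of_forall_dyadic_mem {X : Type*} [TopologicalSpace X] {Y : ℝ → X}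
    (hY : ContinuousOn Y (Icc 0 1)) {C : Set X} (hC : IsClosed C)
    (h : ∀ n k : ℕ, k < 2 ^ n → Y ((k : ℝ) / 2 ^ n) ∈ C) : ∀ s ∈ Icc (0 : ℝ) 1, Y s ∈ C := by
  have hIco : Ico (0 : ℝ) 1 ⊆ Icc 0 1 ∩ Y ⁻¹' C := by
    rintro s ⟨hs0, hs1⟩
    have hfloor_lt : ∀ n : ℕ, ⌊s * 2 ^ n⌋₊ < 2 ^ n := fun n =>
      (Nat.floor_lt (by positivity)).2 <| by
        push_cast
        nlinarith [pow_pos (two_pos : (0 : ℝ) < 2) n]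
    have hmem : ∀ n : ℕ, (⌊s * 2 ^ n⌋₊ : ℝ) / 2 ^ n ∈ Icc (0 : ℝ) 1 := fun n =>
      ⟨by positivity, div_le_one_of_le₀ (by exact_mod_cast (hfloor_lt n).le) (by positivity)⟩
    have htend := tendsto_nhdsWithin_iff.mpr
      ⟨tendsto_floor_mul_two_pow_div hs0, Eventually.of_forall hmem⟩
    exact ⟨⟨hs0, hs1.le⟩, hC.mem_of_tendsto ((hY s ⟨hs0, hs1.le⟩).tendsto.comp htend)
      (Eventually.of_forall fun n => h n _ (hfloor_lt n))⟩
  intro s hs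
  rw [← closure_Ico zero_ne_one] at hs
  exact (closure_minimal hIco (hY.preimage_isClosed_of_isClosed isClosed_Icc hC) hs).2

/-- Dyadic chaining bound: if a continuous path `Y` on `[0,1]` satisfies
`‖Y(0)‖ < R(ρ−1)/ρ` and, for every `n ≥ 1` and every dyadic point `t = k/2ⁿ` of level `n`,
`‖Y(t) − Y(t₋)‖ < R(ρ−1)/ρ^{n+1}` where `t₋ = ⌊k/2⌋/2^{n−1}` is the largest level-`(n−1)`
dyadic point `≤ t`, then `sup_{s∈[0,1]} ‖Y(s)‖ ≤ R`. -/
theorem stmt10 {d : ℕ} (Y : ℝ → EuclideanSpace ℝ (Fin d)) (hY : ContinuousOn Y (Icc 0 1))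
    (R ρ : ℝ) (hR : 0 < R) (hρ : 1 < ρ)
    (h0 : ‖Y 0‖ < R * (ρ - 1) / ρ)
    (hinc : ∀ n : ℕ, 1 ≤ n → ∀ k : ℕ, k ≤ 2 ^ n →
      ‖Y ((k : ℝ) / 2 ^ n) - Y ((↑(k / 2) : ℝ) / 2 ^ (n - 1))‖ < R * (ρ - 1) / ρ ^ (n + 1)) :
    ∀ s ∈ Icc (0:ℝ) 1, ‖Y s‖ ≤ R := by
  have hρ0 : 0 < ρ := zero_lt_one.trans hρ
  have hchain := norm_dyadic_le_sum Y (fun i => R * (ρ - 1) / ρ ^ (i + 1))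
    (by simpa using h0.le) (fun n k hk => (hinc (n + 1) n.succ_pos k hk.le).le)
  have hdyadic : ∀ n k : ℕ, k < 2 ^ n → Y ((k : ℝ) / 2 ^ n) ∈ Metric.closedBall 0 R := by
    intro n k hk
    have hpos : 0 < (ρ ^ (n + 1))⁻¹ := by positivity
    rw [mem_closedBall_zero_iff]
    calc ‖Y ((k : ℝ) / 2 ^ n)‖ ≤ R * (1 - (ρ ^ (n + 1))⁻¹) := by
          simpa only [sum_range_mul_sub_one_div_pow_succ hρ0.ne'] using hchain n k hk
      _ ≤ R := by nlinarith
  intro s hs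
  exact mem_closedBall_zero_iff.mp
    (hY.mem_of_forall_dyadic_mem Metric.isClosed_closedBall hdyadic s hs)
end

section
/- Let λ > 0, N ∈ ℝ with N ≠ 0, δ > 0, and let y : [0,∞) → ℝ be continuous with e^{−λt} y(t) → N as t → ∞. For every ε > 0 with ε|y(0)| < δ, the hitting time τ_ε = inf{ t ≥ 0 : ε |y(t)| ≥ δ } is finite, and lim_{ε→0+} [ τ_ε − λ^{−1} ln( δ / (ε |N|) ) ] = 0. -/
/-!
With `f = |y|` and `A = |N| > 0`, for every `η > 0` eventually
`A e^{λ(t-η)} ≤ f(t) ≤ A e^{λ(t+η)}`. The lower envelope reaches the level `c` at time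
`λ⁻¹ log(c/A) + η`, an upper bound for the hitting time of `c`. Conversely, `f` is bounded on the
compact interval before the envelopes hold, so once `c` exceeds that bound, `f` can reach `c` only
where the upper envelope does, i.e. not before `λ⁻¹ log(c/A) - η`. The level `c = δ/ε` tends to
`∞` as `ε → 0+`.
-/

open Filter Set Real Topology

def hittingSet (f : ℝ → ℝ) (c : ℝ) : Set ℝ :=
  {t | 0 ≤ t ∧ c ≤ f t}

-- Junk value `0` when `f` never reaches `c`, since `sInf ∅ = 0` in `ℝ`.
noncomputable def hittingTime (f : ℝ → ℝ) (c : ℝ) : ℝ :=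
  sInf (hittingSet f c)

section HittingTime

variable {lam a b A : ℝ} {f : ℝ → ℝ}

theorem tendsto_inv_mul_log_div_atTop (hlam : 0 < lam) (ha : 0 < a) :
    Tendsto (fun c => lam⁻¹ * log (c / a)) atTop atTop :=
  (tendsto_log_atTop.comp (tendsto_id.atTop_div_const ha)).const_mul_atTop (inv_pos.mpr hlam)

theorem inv_mul_log_div_mul_exp (hlam : lam ≠ 0) {c : ℝ} (hc : 0 < c) (hA : 0 < A) (s : ℝ) :
    lam⁻¹ * log (c / (A * exp (lam * s))) = lam⁻¹ * log (c / A) - s := by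
  rw [← div_div, log_div (div_pos hc hA).ne' (exp_pos _).ne', log_exp]
  field_simp

theorem tendsto_atTop_of_tendsto_exp_neg_mul_mul (hlam : 0 < lam) (hA : 0 < A)
    (hf : Tendsto (fun t => exp (-lam * t) * f t) atTop (𝓝 A)) :
    Tendsto f atTop atTop := by
  have hexp : Tendsto (fun t => exp (lam * t)) atTop atTop :=
    tendsto_exp_atTop.comp (tendsto_id.const_mul_atTop hlam)
  refine (hexp.atTop_mul_pos hA hf).congr fun t => ?_
  rw [← mul_assoc, ← exp_add]
  simp

theorem hittingSet_nonempty (hf : Tendsto f atTop atTop) (c : ℝ) :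
    (hittingSet f c).Nonempty := by
  obtain ⟨t, hct, ht⟩ := ((hf.eventually_ge_atTop c).and (eventually_ge_atTop 0)).exists
  exact ⟨t, ht, hct⟩

theorem eventually_hittingTime_le (hlam : 0 < lam) (ha : 0 < a)
    (hf : ∀ᶠ t in atTop, a * exp (lam * t) ≤ f t) :
    ∀ᶠ c in atTop, hittingTime f c ≤ lam⁻¹ * log (c / a) := by
  obtain ⟨T, hT⟩ := eventually_atTop.mp hf
  filter_upwards [(tendsto_inv_mul_log_div_atTop hlam ha).eventually_ge_atTop (max T 0),
    eventually_gt_atTop 0] with c hcT hc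
  refine csInf_le ⟨0, fun t ht => ht.1⟩ ⟨(le_max_right _ _).trans hcT, ?_⟩
  calc c = a * exp (lam * (lam⁻¹ * log (c / a))) := by
        rw [← mul_assoc, mul_inv_cancel₀ hlam.ne', one_mul, exp_log (div_pos hc ha)]
        field_simp
    _ ≤ f _ := hT _ ((le_max_left _ _).trans hcT)

theorem eventually_le_of_mem_hittingSet (hlam : 0 < lam) (hb : 0 < b)
    (hbdd : ∀ T, BddAbove (f '' Icc 0 T)) (hf : ∀ᶠ t in atTop, f t ≤ b * exp (lam * t)) :
    ∀ᶠ c in atTop, ∀ t ∈ hittingSet f c, lam⁻¹ * log (c / b) ≤ t := by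
  obtain ⟨T, hT⟩ := eventually_atTop.mp hf
  obtain ⟨M, hM⟩ := hbdd T
  filter_upwards [eventually_gt_atTop M, eventually_gt_atTop 0] with c hcM hc
  rintro t ⟨ht0, hct⟩
  have hTt : T ≤ t := by
    by_contra! htT
    exact absurd (hM ⟨t, ⟨ht0, htT.le⟩, rfl⟩) (by linarith)
  have hlog : log (c / b) ≤ lam * t := by
    rw [log_le_iff_le_exp (div_pos hc hb), div_le_iff₀' hb]
    exact hct.trans (hT t hTt)
  rwa [inv_mul_le_iff₀ hlam]

theorem tendsto_hittingTime_sub_log (hlam : 0 < lam) (hA : 0 < A)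
    (hbdd : ∀ T, BddAbove (f '' Icc 0 T))
    (hf : Tendsto (fun t => exp (-lam * t) * f t) atTop (𝓝 A)) :
    Tendsto (fun c => hittingTime f c - lam⁻¹ * log (c / A)) atTop (𝓝 0) := by
  refine Metric.nhds_basis_closedBall.tendsto_right_iff.mpr fun η hη => ?_
  have hlow : ∀ᶠ t in atTop, A * exp (lam * -η) * exp (lam * t) ≤ f t := by
    have hlt : A * exp (lam * -η) < A :=
      mul_lt_of_lt_one_right hA (exp_lt_one_iff.mpr (by nlinarith))
    filter_upwards [hf.eventually (le_mem_nhds hlt)] with t ht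
    rwa [neg_mul, exp_neg, le_inv_mul_iff₀ (exp_pos _), mul_comm] at ht
  have hhigh : ∀ᶠ t in atTop, f t ≤ A * exp (lam * η) * exp (lam * t) := by
    have hlt : A < A * exp (lam * η) :=
      lt_mul_of_one_lt_right hA (one_lt_exp_iff.mpr (by positivity))
    filter_upwards [hf.eventually (ge_mem_nhds hlt)] with t ht
    rwa [neg_mul, exp_neg, inv_mul_le_iff₀ (exp_pos _), mul_comm] at ht
  filter_upwards [eventually_hittingTime_le hlam (by positivity) hlow,
    eventually_le_of_mem_hittingSet hlam (by positivity) hbdd hhigh,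
    eventually_gt_atTop 0] with c hup hdown hc
  rw [inv_mul_log_div_mul_exp hlam.ne' hc hA] at hup hdown
  have hlb : lam⁻¹ * log (c / A) - η ≤ hittingTime f c :=
    le_csInf (hittingSet_nonempty (tendsto_atTop_of_tendsto_exp_neg_mul_mul hlam hA hf) c) hdown
  rw [Metric.mem_closedBall, dist_zero_right, norm_eq_abs, abs_le]
  constructor <;> linarith

end HittingTime

/-- Deterministic core of the exit-time lemma for the linearized process:
if `e^{−λt} y(t) → N ≠ 0`, then the hitting time `τ_ε = inf{t ≥ 0 : ε|y(t)| ≥ δ}` is finite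
(for `ε` with `ε|y(0)| < δ`), and `τ_ε − λ⁻¹ ln(δ/(ε|N|)) → 0` as `ε → 0+`. -/
theorem stmt11 (lam N δ : ℝ) (hlam : 0 < lam) (hN : N ≠ 0) (hδ : 0 < δ)
    (y : ℝ → ℝ) (hy : Continuous y)
    (hconv : Tendsto (fun t => Real.exp (-lam * t) * y t) atTop (nhds N)) :
    (∀ ε > 0, ε * |y 0| < δ → {t : ℝ | 0 ≤ t ∧ δ ≤ ε * |y t|}.Nonempty) ∧
    Tendsto
      (fun ε => sInf {t : ℝ | 0 ≤ t ∧ δ ≤ ε * |y t|} - lam⁻¹ * Real.log (δ / (ε * |N|)))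
      (nhdsWithin 0 (Ioi 0)) (nhds 0) := by
  have hf : Tendsto (fun t => exp (-lam * t) * |y t|) atTop (𝓝 |N|) := by
    simpa [abs_mul, abs_exp] using hconv.abs
  have hbdd (T : ℝ) : BddAbove ((fun t => |y t|) '' Icc 0 T) :=
    isCompact_Icc.bddAbove_image hy.abs.continuousOn
  have hNpos : 0 < |N| := abs_pos.mpr hN
  have hset {ε : ℝ} (hε : 0 < ε) :
      {t : ℝ | 0 ≤ t ∧ δ ≤ ε * |y t|} = hittingSet (fun t => |y t|) (δ / ε) := by
    simp only [hittingSet, div_le_iff₀' hε]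
  refine ⟨fun ε hε _ => hset hε ▸
    hittingSet_nonempty (tendsto_atTop_of_tendsto_exp_neg_mul_mul hlam hNpos hf) _, ?_⟩
  have hlevel : Tendsto (fun ε => δ / ε) (𝓝[>] 0) atTop :=
    (tendsto_inv_nhdsGT_zero.const_mul_atTop hδ).congr fun ε => (div_eq_mul_inv δ ε).symm
  refine ((tendsto_hittingTime_sub_log hlam hNpos hbdd hf).comp hlevel).congr' ?_
  filter_upwards [self_mem_nhdsWithin] with ε hε
  simp only [Function.comp_apply, hittingTime, hset hε, div_div]
end

section
/- Let λ > ρ > 0, let v be a unit vector in ℝ^d, let L be a subspace with ℝ^d = span{v} ⊕ L, and let Π_v, Π_L be the projections onto span{v} and L along each other. Let N ∈ ℝ, N ≠ 0, C₁ ≥ 0, δ > 0, and let Y : [0,∞) → ℝ^d be continuous with ‖e^{−λt} Y(t) − N v‖ ≤ C₁ e^{−ρt} for all t ≥ 0. For ε > 0 with ε‖Π_v Y(0)‖ < δ set τ_ε = inf{ t ≥ 0 : ε ‖Π_v Y(t)‖ ≥ δ }. Then, with β = ρ/λ, limsup_{ε→0+} ε ‖Π_L Y(τ_ε)‖ / ε^{β}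 ≤ ‖Π_L‖ C₁ (δ/|N|)^{1−ρ/λ}. -/
open Filter Set

/-- Deterministic core of the lemma on the transverse component at the
exit time of the linearized process: if `‖e^{−λt}Y(t) − N v‖ ≤ C₁ e^{−ρt}` and
`τ_ε = inf{t ≥ 0 : ε‖Π_v Y(t)‖ ≥ δ}`, then with `β = ρ/λ`,
`limsup_{ε→0+} ε‖Π_L Y(τ_ε)‖/ε^β ≤ ‖Π_L‖ C₁ (δ/|N|)^{1−ρ/λ}`. -/
theorem stmt12 {d : ℕ} (lam ρ : ℝ) (hρ : 0 < ρ) (hρlam : ρ < lam)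
    (v : EuclideanSpace ℝ (Fin d)) (hv : ‖v‖ = 1)
    (L : Submodule ℝ (EuclideanSpace ℝ (Fin d)))
    (hcompl : IsCompl (Submodule.span ℝ {v}) L)
    (Pv PL : EuclideanSpace ℝ (Fin d) →L[ℝ] EuclideanSpace ℝ (Fin d))
    (hPv : ∀ z, Pv z ∈ Submodule.span ℝ {v}) (hPL : ∀ z, PL z ∈ L)
    (hsum : ∀ z, Pv z + PL z = z)
    (N C₁ δ : ℝ) (hN : N ≠ 0) (hC₁ : 0 ≤ C₁) (hδ : 0 < δ)
    (Y : ℝ → EuclideanSpace ℝ (Fin d)) (hYc : Continuous Y)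
    (hYconv : ∀ t ≥ 0, ‖Real.exp (-lam * t) • Y t - N • v‖ ≤ C₁ * Real.exp (-ρ * t)) :
    Filter.limsup
      (fun ε : ℝ =>
        ε * ‖PL (Y (sInf {t : ℝ | 0 ≤ t ∧ δ ≤ ε * ‖Pv (Y t)‖}))‖ / ε ^ (ρ / lam))
      (nhdsWithin 0 (Ioi 0))
      ≤ ‖PL‖ * C₁ * (δ / |N|) ^ (1 - ρ / lam) := by
  have hlam : 0 < lam := hρ.trans hρlam
  have hN0 : 0 < |N| := abs_pos.mpr hN
  set β : ℝ := ρ / lam with hβdef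
  have hβ0 : 0 < β := div_pos hρ hlam
  have hβ1 : β < 1 := (div_lt_one hlam).mpr hρlam
  have h1β : 0 < 1 - β := by linarith
  set K : ℝ := ‖Pv‖ * C₁ with hKdef
  have hK0 : 0 ≤ K := mul_nonneg (norm_nonneg _) hC₁
  -- projection facts on span v
  have hspan : ∀ x ∈ Submodule.span ℝ ({v} : Set (EuclideanSpace ℝ (Fin d))),
      PL x = 0 ∧ Pv x = x := by
    intro x hx
    have h1 : PL x = x - Pv x := by
      have := hsum x; linear_combination (norm := module) this
    have h2 : PL x ∈ Submodule.span ℝ ({v} : Set (EuclideanSpace ℝ (Fin d))) := by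
      rw [h1]; exact Submodule.sub_mem _ hx (hPv x)
    have h3 : PL x = 0 := Submodule.disjoint_def.mp hcompl.disjoint _ h2 (hPL x)
    refine ⟨h3, ?_⟩
    have := hsum x; rw [h3, add_zero] at this; exact this
  have hmemv : ∀ c : ℝ, (c • v : EuclideanSpace ℝ (Fin d)) ∈ Submodule.span ℝ ({v} : Set _) :=
    fun c => Submodule.smul_mem _ c (Submodule.mem_span_singleton_self v)
  -- decomposition Z t
  set Z : ℝ → EuclideanSpace ℝ (Fin d) := fun t => Y t - (Real.exp (lam * t) * N) • v with hZdef
  have hZnorm : ∀ t ≥ 0, ‖Z t‖ ≤ C₁ * Real.exp ((lam - ρ) * t) := by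
    intro t ht
    have hZ : Z t = Real.exp (lam * t) • (Real.exp (-lam * t) • Y t - N • v) := by
      rw [smul_sub, smul_smul, smul_smul, ← Real.exp_add]
      simp [hZdef]
    rw [hZ, norm_smul, Real.norm_eq_abs, abs_of_pos (Real.exp_pos _)]
    calc Real.exp (lam * t) * ‖Real.exp (-lam * t) • Y t - N • v‖
        ≤ Real.exp (lam * t) * (C₁ * Real.exp (-ρ * t)) := by
          exact mul_le_mul_of_nonneg_left (hYconv t ht) (Real.exp_pos _).le
      _ = C₁ * Real.exp ((lam - ρ) * t) := by
          rw [show (lam - ρ) * t = lam * t + -ρ * t by ring, Real.exp_add]; ring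
  have hYt : ∀ t, Y t = Z t + (Real.exp (lam * t) * N) • v := by
    intro t; simp [hZdef]
  -- PL bound
  have hPLbound : ∀ t ≥ 0, ‖PL (Y t)‖ ≤ ‖PL‖ * C₁ * Real.exp ((lam - ρ) * t) := by
    intro t ht
    have : PL (Y t) = PL (Z t) := by
      rw [hYt t, map_add, (hspan _ (hmemv _)).1, add_zero]
    rw [this]
    calc ‖PL (Z t)‖ ≤ ‖PL‖ * ‖Z t‖ := PL.le_opNorm _
      _ ≤ ‖PL‖ * (C₁ * Real.exp ((lam - ρ) * t)) :=
          mul_le_mul_of_nonneg_left (hZnorm t ht) (norm_nonneg _)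
      _ = ‖PL‖ * C₁ * Real.exp ((lam - ρ) * t) := by ring
  -- Pv lower bound
  have hPvlow : ∀ t ≥ 0, Real.exp (lam * t) * (|N| - K * Real.exp (-ρ * t)) ≤ ‖Pv (Y t)‖ := by
    intro t ht
    have h1 : Pv (Y t) = (Real.exp (lam * t) * N) • v + Pv (Z t) := by
      rw [hYt t, map_add, (hspan _ (hmemv _)).2, add_comm]
    have h2 : ‖((Real.exp (lam * t) * N) • v : EuclideanSpace ℝ (Fin d))‖
        = Real.exp (lam * t) * |N| := by
      rw [norm_smul, hv, mul_one, Real.norm_eq_abs, abs_mul,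
        abs_of_pos (Real.exp_pos _)]
    have h3 : ‖Pv (Z t)‖ ≤ K * Real.exp ((lam - ρ) * t) := by
      calc ‖Pv (Z t)‖ ≤ ‖Pv‖ * ‖Z t‖ := Pv.le_opNorm _
        _ ≤ ‖Pv‖ * (C₁ * Real.exp ((lam - ρ) * t)) :=
            mul_le_mul_of_nonneg_left (hZnorm t ht) (norm_nonneg _)
        _ = K * Real.exp ((lam - ρ) * t) := by rw [hKdef]; ring
    have h4 : Real.exp (lam * t) * |N| - K * Real.exp ((lam - ρ) * t) ≤ ‖Pv (Y t)‖ := by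
      rw [h1]
      have h6 : ‖((Real.exp (lam * t) * N) • v : EuclideanSpace ℝ (Fin d))‖
          ≤ ‖(Real.exp (lam * t) * N) • v + Pv (Z t)‖ + ‖Pv (Z t)‖ := by
        have := norm_sub_le ((Real.exp (lam * t) * N) • v + Pv (Z t)) (Pv (Z t))
        simpa using this
      rw [h2] at h6
      linarith [h3, h6]
    have h5 : Real.exp ((lam - ρ) * t) = Real.exp (lam * t) * Real.exp (-ρ * t) := by
      rw [← Real.exp_add]; ring_nf
    calc Real.exp (lam * t) * (|N| - K * Real.exp (-ρ * t))
        = Real.exp (lam * t) * |N| - K * Real.exp ((lam - ρ) * t) := by rw [h5]; ring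
      _ ≤ ‖Pv (Y t)‖ := h4
  -- the stopping set
  set S : ℝ → Set ℝ := fun ε => {t : ℝ | 0 ≤ t ∧ δ ≤ ε * ‖Pv (Y t)‖} with hSdef
  set τ : ℝ → ℝ := fun ε => sInf (S ε) with hτdef
  have hSclosed : ∀ ε, IsClosed (S ε) := by
    intro ε
    have h1 : Continuous fun t => ε * ‖Pv (Y t)‖ :=
      (continuous_const.mul ((Pv.continuous.comp hYc).norm))
    exact (isClosed_le continuous_const continuous_id).inter
      (isClosed_le continuous_const h1)
  have hSbdd : ∀ ε, BddBelow (S ε) := fun ε => ⟨0, fun t ht => ht.1⟩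
  -- T₀ such that K e^{-ρ t} ≤ |N|/2 for t ≥ T₀, with T₀ ≥ 0
  obtain ⟨T₀', hT₀'⟩ : ∃ T₀ : ℝ, ∀ t ≥ T₀, K * Real.exp (-ρ * t) ≤ |N| / 2 := by
    have htend : Tendsto (fun t : ℝ => K * Real.exp (-ρ * t)) atTop (nhds 0) := by
      have h1 : Tendsto (fun t : ℝ => -ρ * t) atTop atBot := by
        rw [show (fun t : ℝ => -ρ * t) = (fun t : ℝ => -(ρ * t)) by funext t; ring,
          tendsto_neg_atBot_iff]
        exact tendsto_id.const_mul_atTop hρ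
      have := Real.tendsto_exp_atBot.comp h1
      simpa using this.const_mul K
    have := htend.eventually_le_const (by positivity : (0:ℝ) < |N| / 2)
    exact eventually_atTop.mp this
  set T₀ : ℝ := max T₀' 0 with hT₀def
  have hT₀ : ∀ t ≥ T₀, K * Real.exp (-ρ * t) ≤ |N| / 2 :=
    fun t ht => hT₀' t (le_trans (le_max_left _ _) ht)
  have hT₀0 : 0 ≤ T₀ := le_max_right _ _
  -- nonemptiness of S ε for ε > 0
  have hSne : ∀ ε > 0, (S ε).Nonempty := by
    intro ε hε
    have htend : Tendsto (fun t : ℝ => ε * (Real.exp (lam * t) * (|N| / 2))) atTop atTop := by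
      apply Tendsto.const_mul_atTop hε
      apply Tendsto.atTop_mul_const (by positivity)
      exact (Real.tendsto_exp_atTop).comp (tendsto_id.const_mul_atTop hlam)
    have h1 : ∀ᶠ t : ℝ in atTop, δ ≤ ε * (Real.exp (lam * t) * (|N| / 2)) :=
      htend.eventually_ge_atTop δ
    have h2 : ∀ᶠ t : ℝ in atTop, T₀ ≤ t := eventually_ge_atTop T₀
    obtain ⟨t, ht1, ht2⟩ := (h1.and h2).exists
    have ht0 : 0 ≤ t := le_trans hT₀0 ht2
    refine ⟨t, ht0, ?_⟩
    have h3 : |N| / 2 ≤ |N| - K * Real.exp (-ρ * t) := by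
      have := hT₀ t ht2; linarith
    calc δ ≤ ε * (Real.exp (lam * t) * (|N| / 2)) := ht1
      _ ≤ ε * (Real.exp (lam * t) * (|N| - K * Real.exp (-ρ * t))) := by
          apply mul_le_mul_of_nonneg_left _ hε.le
          exact mul_le_mul_of_nonneg_left h3 (Real.exp_pos _).le
      _ ≤ ε * ‖Pv (Y t)‖ := mul_le_mul_of_nonneg_left (hPvlow t ht0) hε.le
  have hτmem : ∀ ε > 0, τ ε ∈ S ε := fun ε hε =>
    (hSclosed ε).csInf_mem (hSne ε hε) (hSbdd ε)
  -- τ tends to atTop as ε → 0⁺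
  set F : Filter ℝ := nhdsWithin 0 (Ioi 0) with hFdef
  have hτtop : Tendsto τ F atTop := by
    rw [tendsto_atTop]
    intro T
    set T' : ℝ := max T 0 with hT'def
    obtain ⟨C, hC⟩ := (isCompact_Icc : IsCompact (Icc (0:ℝ) T')).exists_bound_of_continuousOn
      ((Pv.continuous.comp hYc).continuousOn (s := Icc 0 T')).norm
    have hC0 : 0 ≤ C := le_trans (norm_nonneg _) (by
      simpa using hC 0 ⟨le_refl 0, le_max_right _ _⟩)
    have hmem : Ioo (0:ℝ) (δ / (C + 1)) ∈ F :=
      Ioo_mem_nhdsGT_of_mem ⟨le_refl 0, by positivity⟩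
    filter_upwards [hmem] with ε hε
    have hε0 : 0 < ε := hε.1
    have hsub : ∀ t ∈ S ε, T' < t := by
      intro t ht
      by_contra hcon
      push_neg at hcon
      have h1 : ‖Pv (Y t)‖ ≤ C := by simpa using hC t ⟨ht.1, hcon⟩
      have h2 : ε * ‖Pv (Y t)‖ < δ := by
        calc ε * ‖Pv (Y t)‖ ≤ ε * C := mul_le_mul_of_nonneg_left h1 hε0.le
          _ < (δ / (C + 1)) * (C + 1) := by
              apply mul_lt_mul' (le_of_lt hε.2) (by linarith) hC0 (by positivity)
          _ = δ := by field_simp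
      exact absurd ht.2 (not_le.mpr h2)
    have : T' ≤ τ ε := le_csInf (hSne ε hε0) (fun b hb => (hsub b hb).le)
    exact le_trans (le_max_left _ _) this
  -- at the stopping time, upper bound ε ‖Pv (Y (τ ε))‖ ≤ δ when τ ε > 0
  have hτub : ∀ ε > 0, 0 < τ ε → ε * ‖Pv (Y (τ ε))‖ ≤ δ := by
    intro ε hε hτpos
    have hcont : ContinuousAt (fun t => ε * ‖Pv (Y t)‖) (τ ε) :=
      (continuous_const.mul ((Pv.continuous.comp hYc).norm)).continuousAt
    have hne : (nhdsWithin (τ ε) (Iio (τ ε))).NeBot := nhdsLT_neBot _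
    have htendsto : Tendsto (fun t => ε * ‖Pv (Y t)‖) (nhdsWithin (τ ε) (Iio (τ ε)))
        (nhds (ε * ‖Pv (Y (τ ε))‖)) :=
      hcont.continuousWithinAt.tendsto
    refine le_of_tendsto htendsto ?_
    have hIoo : Ioo 0 (τ ε) ∈ nhdsWithin (τ ε) (Iio (τ ε)) := by
      rw [mem_nhdsWithin]
      exact ⟨Ioi 0, isOpen_Ioi, hτpos, fun x hx => ⟨hx.1, hx.2⟩⟩
    filter_upwards [hIoo] with t ht
    have htS : t ∉ S ε := notMem_of_lt_csInf ht.2 (hSbdd ε)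
    have : ¬ (δ ≤ ε * ‖Pv (Y t)‖) := fun h => htS ⟨ht.1.le, h⟩
    linarith [not_le.mp this]
  -- g : comparison function
  set g : ℝ → ℝ := fun ε => ‖PL‖ * C₁ * (δ / (|N| - K * Real.exp (-ρ * τ ε))) ^ (1 - β)
    with hgdef
  set f : ℝ → ℝ := fun ε =>
    ε * ‖PL (Y (sInf {t : ℝ | 0 ≤ t ∧ δ ≤ ε * ‖Pv (Y t)‖}))‖ / ε ^ (ρ / lam) with hfdef
  -- f ≤ᶠ g and f ≥ 0 eventually
  have hmemF : ∀ᶠ ε in F, 0 < ε := self_mem_nhdsWithin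
  have hτbig : ∀ᶠ ε in F, max T₀ 1 ≤ τ ε := hτtop.eventually_ge_atTop _
  have hfg : ∀ᶠ ε in F, f ε ≤ g ε ∧ 0 ≤ f ε := by
    filter_upwards [hmemF, hτbig] with ε hε hτ
    have hτT₀ : T₀ ≤ τ ε := le_trans (le_max_left _ _) hτ
    have hτpos : 0 < τ ε := lt_of_lt_of_le (by linarith [le_max_right T₀ 1] : (0:ℝ) < max T₀ 1) hτ
    have ht0 : 0 ≤ τ ε := hτpos.le
    set t : ℝ := τ ε with htdef
    set η : ℝ := K * Real.exp (-ρ * t) with hηdef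
    have hη2 : η ≤ |N| / 2 := hT₀ t hτT₀
    have hη0 : 0 ≤ η := mul_nonneg hK0 (Real.exp_pos _).le
    have hNη : 0 < |N| - η := by linarith
    set b : ℝ := Real.exp (lam * t) with hbdef
    have hb0 : 0 < b := Real.exp_pos _
    have hub : ε * ‖Pv (Y t)‖ ≤ δ := hτub ε hε hτpos
    have hεb : ε * b ≤ δ / (|N| - η) := by
      rw [le_div_iff₀ hNη]
      calc ε * b * (|N| - η) = ε * (b * (|N| - η)) := by ring
        _ ≤ ε * ‖Pv (Y t)‖ := mul_le_mul_of_nonneg_left (hPvlow t ht0) hε.le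
        _ ≤ δ := hub
    have hexp : Real.exp ((lam - ρ) * t) = b ^ (1 - β) := by
      rw [hbdef, ← Real.exp_mul]
      congr 1
      rw [hβdef]
      field_simp
    have hεpow : ε / ε ^ β = ε ^ (1 - β) := by
      rw [Real.rpow_sub hε, Real.rpow_one]
    constructor
    · show ε * ‖PL (Y t)‖ / ε ^ β ≤ g ε
      have h1 : ε * ‖PL (Y t)‖ / ε ^ β ≤ ‖PL‖ * C₁ * (ε * b) ^ (1 - β) := by
        have h2 : ε * ‖PL (Y t)‖ ≤ ε * (‖PL‖ * C₁ * b ^ (1 - β)) := by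
          rw [← hexp]
          exact mul_le_mul_of_nonneg_left (hPLbound t ht0) hε.le
        have hεβpos : 0 < ε ^ β := Real.rpow_pos_of_pos hε β
        calc ε * ‖PL (Y t)‖ / ε ^ β ≤ ε * (‖PL‖ * C₁ * b ^ (1 - β)) / ε ^ β :=
              by gcongr
          _ = ‖PL‖ * C₁ * (b ^ (1 - β) * (ε / ε ^ β)) := by ring
          _ = ‖PL‖ * C₁ * (b ^ (1 - β) * ε ^ (1 - β)) := by rw [hεpow]
          _ = ‖PL‖ * C₁ * (ε * b) ^ (1 - β) := by
              rw [Real.mul_rpow hε.le hb0.le]; ring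
      refine h1.trans ?_
      apply mul_le_mul_of_nonneg_left _ (by positivity : (0:ℝ) ≤ ‖PL‖ * C₁)
      exact Real.rpow_le_rpow (by positivity) hεb h1β.le
    · show 0 ≤ ε * ‖PL (Y t)‖ / ε ^ β
      positivity
  -- g tends to the RHS
  have hg : Tendsto g F (nhds (‖PL‖ * C₁ * (δ / |N|) ^ (1 - β))) := by
    have h1 : Tendsto (fun ε => K * Real.exp (-ρ * τ ε)) F (nhds 0) := by
      have h2 : Tendsto (fun t : ℝ => -ρ * t) atTop atBot := by
        rw [show (fun t : ℝ => -ρ * t) = (fun t : ℝ => -(ρ * t)) by funext t; ring,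
          tendsto_neg_atBot_iff]
        exact tendsto_id.const_mul_atTop hρ
      have := (Real.tendsto_exp_atBot.comp h2).comp hτtop
      simpa using this.const_mul K
    have h3 : Tendsto (fun ε => δ / (|N| - K * Real.exp (-ρ * τ ε))) F (nhds (δ / |N|)) := by
      have h4 : Tendsto (fun ε => |N| - K * Real.exp (-ρ * τ ε)) F (nhds |N|) := by
        have := (tendsto_const_nhds (x := |N|) (f := F)).sub h1
        simpa using this
      exact tendsto_const_nhds.div h4 hN0.ne'
    have h5 := h3.rpow_const (Or.inr h1β.le)
    exact h5.const_mul _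
  -- conclude
  have hNeBot : F.NeBot := nhdsGT_neBot 0
  have hfg' : f ≤ᶠ[F] g := hfg.mono fun ε h => h.1
  have hf0 : ∀ᶠ ε in F, (0:ℝ) ≤ f ε := hfg.mono fun ε h => h.2
  have hcob : Filter.IsCoboundedUnder (· ≤ ·) F f :=
    Filter.IsBoundedUnder.isCoboundedUnder_le ⟨0, by simpa using hf0⟩
  have hbdd : Filter.IsBoundedUnder (· ≤ ·) F g := hg.isBoundedUnder_le
  calc Filter.limsup f F ≤ Filter.limsup g F := limsup_le_limsup hfg' hcob hbdd
    _ = ‖PL‖ * C₁ * (δ / |N|) ^ (1 - β) := hg.limsup_eq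
end

section
/- Let a ∈ ℝ, c ≥ 0, T > 0, and let g : [0,T] → [0,∞) be continuous. Suppose u : [0,T] → ℝ is differentiable with u(0) = 0 and u'(t) = a u(t) + c u(t)² + g(t) for all t ∈ [0,T]. If U : [0,T] → [0,∞) is continuous and satisfies U(t) ≤ ∫_0^t e^{a(t−s)} ( c U(s)² + g(s) ) ds for all t ∈ [0,T], then U(t) ≤ u(t) for all t ∈ [0,T]. -/
open Set intervalIntegral Topology Real
open MeasureTheory (volume)

/-!
Variation of constants turns the ODE into `u t = ∫₀ᵗ e^{a(t-s)} (c u(s)² + g(s)) ds`, which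
also shows `u ≥ 0`. Subtracting this from the inequality for `U` and writing
`U² - u² = (U + u)(U - u)` with `U + u` bounded on `[0, T]` gives
`(U - u)⁺ t ≤ K ∫₀ᵗ (U - u)⁺`, and the integral form of Grönwall's inequality forces
`(U - u)⁺ = 0`.
-/

theorem hasDerivWithinAt_integral_Ici {f : ℝ → ℝ} {a b x : ℝ}
    (hf : ContinuousOn f (Icc a b)) (hx : x ∈ Ico a b) :
    HasDerivWithinAt (fun t => ∫ s in a..t, f s) (f x) (Ici x) x := by
  have hmem : Icc a b ∈ 𝓝[>] x := Icc_mem_nhdsGT_of_mem hx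
  have hint : IntervalIntegrable f volume a x :=
    (hf.mono (Icc_subset_Icc_right hx.2.le)).intervalIntegrable_of_Icc hx.1
  exact integral_hasDerivWithinAt_right hint
    ((hf.stronglyMeasurableAtFilter_nhdsWithin measurableSet_Icc x).filter_mono
      (nhdsWithin_le_of_mem hmem))
    ((hf x (Ico_subset_Icc_self hx)).mono_of_mem_nhdsWithin hmem)

theorem eq_zero_of_le_mul_integral {f : ℝ → ℝ} {K a b : ℝ}
    (hf : ContinuousOn f (Icc a b)) (hf0 : ∀ t ∈ Icc a b, 0 ≤ f t)
    (h : ∀ t ∈ Icc a b, f t ≤ K * ∫ s in a..t, f s) :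
    ∀ t ∈ Icc a b, f t = 0 := by
  have hF0 : ∀ t ∈ Icc a b, 0 ≤ ∫ s in a..t, f s := fun t ht =>
    integral_nonneg ht.1 fun s hs => hf0 s (Icc_subset_Icc_right ht.2 hs)
  have hFc : ContinuousOn (fun t => ∫ s in a..t, f s) (Icc a b) :=
    (continuousOn_primitive hf.integrableOn_Icc).congr fun t ht => integral_of_le ht.1
  have hF : ∀ t ∈ Icc a b, ∫ s in a..t, f s = 0 :=
    eq_zero_of_abs_deriv_le_mul_abs_self_of_eq_zero_right hFc
      (fun x hx => hasDerivWithinAt_integral_Ici hf hx) integral_same fun x hx => by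
        have hx' := Ico_subset_Icc_self hx
        rw [Real.norm_of_nonneg (hf0 x hx'), Real.norm_of_nonneg (hF0 x hx')]
        exact h x hx'
  exact fun t ht => le_antisymm (by simpa [hF t ht] using h t ht) (hf0 t ht)

theorem eq_exp_mul_add_integral_of_hasDerivAt {u h : ℝ → ℝ} {a t₀ t : ℝ} (ht : t₀ ≤ t)
    (hu : ∀ s ∈ Icc t₀ t, HasDerivAt u (a * u s + h s) s) (hh : ContinuousOn h (Icc t₀ t)) :
    u t = exp (a * (t - t₀)) * u t₀ + ∫ s in t₀..t, exp (a * (t - s)) * h s := by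
  have hP : ∀ s ∈ uIcc t₀ t,
      HasDerivAt (fun s => exp (-a * s) * u s) (exp (-a * s) * h s) s := by
    intro s hs
    rw [uIcc_of_le ht] at hs
    have hexp : HasDerivAt (fun s => exp (-a * s)) (exp (-a * s) * -a) s := by
      simpa using ((hasDerivAt_id s).const_mul (-a)).exp
    exact (hexp.mul (hu s hs)).congr_deriv (by ring)
  have hint : IntervalIntegrable (fun s => exp (-a * s) * h s) volume t₀ t :=
    ContinuousOn.intervalIntegrable_of_Icc ht (by fun_prop)
  have hFTC := integral_eq_sub_of_hasDerivAt hP hint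
  have hfactor : ∫ s in t₀..t, exp (a * (t - s)) * h s
      = exp (a * t) * ∫ s in t₀..t, exp (-a * s) * h s := by
    rw [← integral_const_mul]
    refine integral_congr fun s _ => ?_
    simp only [← mul_assoc, ← exp_add]
    ring_nf
  have hinv : exp (a * t) * exp (-a * t) = 1 := by rw [← exp_add]; simp
  have hshift : exp (a * (t - t₀)) = exp (a * t) * exp (-a * t₀) := by rw [← exp_add]; ring_nf
  rw [hfactor, hFTC, hshift]
  linear_combination (-u t) * hinv

theorem exp_mul_sub_exp_mul_le_posPart {a c s t T x y r B : ℝ} (hs : 0 ≤ s) (hst : s ≤ t)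
    (htT : t ≤ T) (hxy : 0 ≤ c * (x + y)) (hB : c * (x + y) ≤ B) :
    exp (a * (t - s)) * (c * x ^ 2 + r) - exp (a * (t - s)) * (c * y ^ 2 + r)
      ≤ exp (|a| * T) * B * (x - y)⁺ := by
  have hexp : exp (a * (t - s)) ≤ exp (|a| * T) :=
    exp_le_exp.2 (by nlinarith [abs_nonneg a, le_abs_self a])
  calc _ = exp (a * (t - s)) * (c * (x + y)) * (x - y) := by ring
    _ ≤ exp (a * (t - s)) * (c * (x + y)) * (x - y)⁺ :=
      mul_le_mul_of_nonneg_left (le_posPart _) (by positivity)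
    _ ≤ exp (|a| * T) * B * (x - y)⁺ :=
      mul_le_mul_of_nonneg_right (mul_le_mul hexp hB hxy (exp_pos _).le) (posPart_nonneg _)

theorem posPart_sub_le_mul_integral {a c T : ℝ} {g U u : ℝ → ℝ} (hc : 0 ≤ c)
    (hg : ContinuousOn g (Icc 0 T))
    (hUc : ContinuousOn U (Icc 0 T)) (hU0 : ∀ t ∈ Icc 0 T, 0 ≤ U t)
    (huc : ContinuousOn u (Icc 0 T)) (hu0 : ∀ t ∈ Icc 0 T, 0 ≤ u t)
    (hUle : ∀ t ∈ Icc (0:ℝ) T,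
      U t ≤ ∫ s in (0:ℝ)..t, exp (a * (t - s)) * (c * U s ^ 2 + g s))
    (hu : ∀ t ∈ Icc (0:ℝ) T,
      u t = ∫ s in (0:ℝ)..t, exp (a * (t - s)) * (c * u s ^ 2 + g s)) :
    ∃ K, ∀ t ∈ Icc 0 T, (U t - u t)⁺ ≤ K * ∫ s in (0:ℝ)..t, (U s - u s)⁺ := by
  obtain ⟨B, hB⟩ := isCompact_Icc.exists_bound_of_continuousOn
    (continuousOn_const.mul (hUc.add huc) : ContinuousOn (fun s => c * (U s + u s)) (Icc 0 T))
  refine ⟨exp (|a| * T) * B, fun t ht => ?_⟩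
  have hB0 : 0 ≤ B := (norm_nonneg _).trans (hB 0 ⟨le_rfl, ht.1.trans ht.2⟩)
  have hsub : Icc 0 t ⊆ Icc 0 T := Icc_subset_Icc_right ht.2
  have hint : ∀ v : ℝ → ℝ, ContinuousOn v (Icc 0 T) → IntervalIntegrable
      (fun s => exp (a * (t - s)) * (c * v s ^ 2 + g s)) volume 0 t :=
    fun v hv => ContinuousOn.intervalIntegrable_of_Icc ht.1 (ContinuousOn.mono (by fun_prop) hsub)
  have hint_pos : IntervalIntegrable (fun s => (U s - u s)⁺) volume 0 t :=
    ContinuousOn.intervalIntegrable_of_Icc ht.1 (ContinuousOn.mono (by fun_prop) hsub)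
  have hpt : ∀ s ∈ Icc 0 t, exp (a * (t - s)) * (c * U s ^ 2 + g s)
      - exp (a * (t - s)) * (c * u s ^ 2 + g s) ≤ exp (|a| * T) * B * (U s - u s)⁺ :=
    fun s hs => exp_mul_sub_exp_mul_le_posPart hs.1 hs.2 ht.2
      (mul_nonneg hc (add_nonneg (hU0 s (hsub hs)) (hu0 s (hsub hs))))
      ((le_abs_self _).trans (hB s (hsub hs)))
  refine sup_le ?_ (mul_nonneg (by positivity) (integral_nonneg ht.1 fun _ _ => posPart_nonneg _))
  calc U t - u t ≤ (∫ s in (0:ℝ)..t, exp (a * (t - s)) * (c * U s ^ 2 + g s))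
        - ∫ s in (0:ℝ)..t, exp (a * (t - s)) * (c * u s ^ 2 + g s) := by
        rw [← hu t ht]; exact sub_le_sub_right (hUle t ht) _
    _ = ∫ s in (0:ℝ)..t, (exp (a * (t - s)) * (c * U s ^ 2 + g s)
        - exp (a * (t - s)) * (c * u s ^ 2 + g s)) :=
        (integral_sub (hint U hUc) (hint u huc)).symm
    _ ≤ ∫ s in (0:ℝ)..t, exp (|a| * T) * B * (U s - u s)⁺ :=
        integral_mono_on ht.1 ((hint U hUc).sub (hint u huc)) (hint_pos.const_mul _) hpt
    _ = exp (|a| * T) * B * ∫ s in (0:ℝ)..t, (U s - u s)⁺ := integral_const_mul _ _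

theorem stmt14_general (a c T : ℝ) (hc : 0 ≤ c)
    (g : ℝ → ℝ) (hg : ContinuousOn g (Icc 0 T)) (hg0 : ∀ t ∈ Icc (0:ℝ) T, 0 ≤ g t)
    (u : ℝ → ℝ) (hu0 : u 0 = 0)
    (hu : ∀ t ∈ Icc (0:ℝ) T, HasDerivAt u (a * u t + c * u t ^ 2 + g t) t)
    (U : ℝ → ℝ) (hUc : ContinuousOn U (Icc 0 T)) (hU0 : ∀ t ∈ Icc (0:ℝ) T, 0 ≤ U t)
    (hUle : ∀ t ∈ Icc (0:ℝ) T,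
      U t ≤ ∫ s in (0:ℝ)..t, Real.exp (a * (t - s)) * (c * U s ^ 2 + g s)) :
    ∀ t ∈ Icc (0:ℝ) T, U t ≤ u t := by
  have huc : ContinuousOn u (Icc 0 T) := fun t ht => (hu t ht).continuousAt.continuousWithinAt
  have hu_eq : ∀ t ∈ Icc (0:ℝ) T,
      u t = ∫ s in (0:ℝ)..t, exp (a * (t - s)) * (c * u s ^ 2 + g s) := by
    intro t ht
    have hsub : Icc 0 t ⊆ Icc 0 T := Icc_subset_Icc_right ht.2
    simpa [hu0, add_assoc] using eq_exp_mul_add_integral_of_hasDerivAt ht.1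
      (fun s hs => (hu s (hsub hs)).congr_deriv (add_assoc _ _ _))
      (ContinuousOn.mono (by fun_prop) hsub)
  have hu_nonneg : ∀ t ∈ Icc (0:ℝ) T, 0 ≤ u t := fun t ht => by
    rw [hu_eq t ht]
    refine integral_nonneg ht.1 fun s hs => ?_
    have := hg0 s (Icc_subset_Icc_right ht.2 hs)
    positivity
  obtain ⟨K, hK⟩ := posPart_sub_le_mul_integral hc hg hUc hU0 huc hu_nonneg hUle hu_eq
  have hzero := eq_zero_of_le_mul_integral (by fun_prop) (fun t _ => posPart_nonneg _) hK
  exact fun t ht => sub_nonpos.1 (posPart_eq_zero.1 (hzero t ht))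

/-- Comparison principle used to bound the distance between the nonlinear
diffusion and its linearization: if `u' = a u + c u² + g`, `u(0) = 0`, and a nonnegative
continuous `U` satisfies `U(t) ≤ ∫₀ᵗ e^{a(t−s)} (c U(s)² + g(s)) ds`, then `U ≤ u` on `[0,T]`. -/
theorem stmt14 (a c T : ℝ) (hc : 0 ≤ c) (hT : 0 < T)
    (g : ℝ → ℝ) (hg : ContinuousOn g (Icc 0 T)) (hg0 : ∀ t ∈ Icc (0:ℝ) T, 0 ≤ g t)
    (u : ℝ → ℝ) (hu0 : u 0 = 0)
    (hu : ∀ t ∈ Icc (0:ℝ) T, HasDerivAt u (a * u t + c * u t ^ 2 + g t) t)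
    (U : ℝ → ℝ) (hUc : ContinuousOn U (Icc 0 T)) (hU0 : ∀ t ∈ Icc (0:ℝ) T, 0 ≤ U t)
    (hUle : ∀ t ∈ Icc (0:ℝ) T,
      U t ≤ ∫ s in (0:ℝ)..t, Real.exp (a * (t - s)) * (c * U s ^ 2 + g s)) :
    ∀ t ∈ Icc (0:ℝ) T, U t ≤ u t :=
  stmt14_general a c T hc g hg hg0 u hu0 hu U hUc hU0 hUle
end
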